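/- arXiv:1402.1272 — 4 statements merged into one kernel-verified Lean document; each statement's English description precedes it below -/
import Mathlib

section
/- Let Λ = {λ_n} be an increasing sequence of positive reals with λ_1 > 1, λ_n → ∞, and ∑ 1/λ_n = ∞. If liminf_{n→∞} λ_{2n}/λ_n = q > 1, then every function of bounded Λ#-variation on [0,1)² is continuous in Λ#-variation, i.e. Λ#V = CΛ#V. -/
open MeasureTheory Filter Set ENNReal

noncomputable section

/-- The basic Rademacher-type function: 1 on [0,1/2), -1 on [1/2,1), 1-periodic. -/
def r0 (x : ℝ) : ℝ := if Int.fract x < 1/2 then 1 else -1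

/-- The Walsh functions: products of Rademacher functions according to binary digits. -/
def walsh (k : ℕ) (x : ℝ) : ℝ :=
  ∏ j ∈ Finset.range k, if k.testBit j then r0 (2 ^ j * x) else 1

/-- The Walsh–Dirichlet kernel `D_n`. -/
def walshDirichlet (n : ℕ) (x : ℝ) : ℝ :=
  ∑ k ∈ Finset.range n, walsh k x

/-- A finite ordered family of nonoverlapping subintervals of `[0,1)`. -/
structure IntervalPack (n : ℕ) where
  a : Fin n → ℝ
  b : Fin n → ℝ
  ha : ∀ i, 0 ≤ a i
  hab : ∀ i, a i < b i
  hb : ∀ i, b i ≤ 1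
  disj : ∀ i j, i ≠ j → Disjoint (Ioo (a i) (b i)) (Ioo (a j) (b j))

/-- A family of nonoverlapping intervals together with a point `y i` for each interval. -/
structure SharpPack (n : ℕ) extends IntervalPack n where
  y : Fin n → ℝ
  hy : ∀ i, y i ∈ Ico (0:ℝ) 1

/-- The `Λ^#`-variation sum of `f` over a pack, with weight sequence shifted by `m`
(weight `Λ (m+i)` for the `i`-th interval, `1`-based). -/
def sharpSum {n : ℕ} (Λ : ℕ → ℝ) (m : ℕ) (f : ℝ → ℝ → ℝ) (P : SharpPack n) : ℝ≥0∞ :=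
  ∑ i : Fin n, ENNReal.ofReal
    (|f (P.b i) (P.y i) - f (P.a i) (P.y i)| / Λ (m + i.1 + 1))

/-- `Λ_m^# V_1 (f)`. -/
def sharpV1 (Λ : ℕ → ℝ) (m : ℕ) (f : ℝ → ℝ → ℝ) : ℝ≥0∞ :=
  ⨆ (n : ℕ) (P : SharpPack n), sharpSum Λ m f P

/-- `Λ_m^# V_2 (f)`. -/
def sharpV2 (Λ : ℕ → ℝ) (m : ℕ) (f : ℝ → ℝ → ℝ) : ℝ≥0∞ :=
  sharpV1 Λ m (fun x y => f y x)

/-- `Λ_m^# V (f) = Λ_m^# V_1 (f) + Λ_m^# V_2 (f)`. -/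
def sharpV (Λ : ℕ → ℝ) (m : ℕ) (f : ℝ → ℝ → ℝ) : ℝ≥0∞ :=
  sharpV1 Λ m f + sharpV2 Λ m f

/-- `f ∈ Λ^# BV`: bounded `Λ^#`-variation. -/
def SharpBV (Λ : ℕ → ℝ) (f : ℝ → ℝ → ℝ) : Prop := sharpV Λ 0 f ≠ ⊤

/-- `f ∈ C Λ^# V`: continuity in `Λ^#`-variation, i.e. `Λ_m^# V (f) → 0`. -/
def CSharpV (Λ : ℕ → ℝ) (f : ℝ → ℝ → ℝ) : Prop :=
  Tendsto (fun m => sharpV Λ m f) atTop (nhds 0)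

/-- `v_1^#(n, f)`: supremum of sums of `n` increments over `n` nonoverlapping
intervals, with freely chosen points `y_i`. -/
def vSharp1 (f : ℝ → ℝ → ℝ) (n : ℕ) : ℝ≥0∞ :=
  ⨆ (P : SharpPack n), ∑ i : Fin n,
    ENNReal.ofReal |f (P.b i) (P.y i) - f (P.a i) (P.y i)|

def vSharp2 (f : ℝ → ℝ → ℝ) (n : ℕ) : ℝ≥0∞ := vSharp1 (fun x y => f y x) n

/-- `Λ V_1 (f)`: one fixed `y` for the whole family of intervals. -/
def lineV1 (Λ : ℕ → ℝ) (f : ℝ → ℝ → ℝ) : ℝ≥0∞ :=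
  ⨆ (n : ℕ) (y : Ico (0:ℝ) 1) (P : IntervalPack n),
    ∑ i : Fin n, ENNReal.ofReal (|f (P.b i) (y : ℝ) - f (P.a i) (y : ℝ)| / Λ (i.1 + 1))

def lineV2 (Λ : ℕ → ℝ) (f : ℝ → ℝ → ℝ) : ℝ≥0∞ := lineV1 Λ (fun x y => f y x)

/-- The mixed `(Λ¹,Λ²)`-variation `(Λ¹Λ²) V_{1,2}(f)`. -/
def mixedV (Λ₁ Λ₂ : ℕ → ℝ) (f : ℝ → ℝ → ℝ) : ℝ≥0∞ :=
  ⨆ (n : ℕ) (m : ℕ) (P : IntervalPack n) (Q : IntervalPack m),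
    ∑ i : Fin n, ∑ j : Fin m, ENNReal.ofReal
      (|f (P.a i) (Q.a j) - f (P.a i) (Q.b j) - f (P.b i) (Q.a j) + f (P.b i) (Q.b j)| /
        (Λ₁ (i.1 + 1) * Λ₂ (j.1 + 1)))

/-- Harmonic bounded variation `HBV` in the sense of Hardy–Krause/Waterman type. -/
def HBV (f : ℝ → ℝ → ℝ) : Prop :=
  lineV1 (fun n => (n : ℝ)) f + lineV2 (fun n => (n : ℝ)) f +
    mixedV (fun n => (n : ℝ)) (fun n => (n : ℝ)) f ≠ ⊤

/-- A finite family of nonoverlapping rectangles in `[0,1)²`. -/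
structure RectPack (n : ℕ) where
  a : Fin n → ℝ
  b : Fin n → ℝ
  c : Fin n → ℝ
  d : Fin n → ℝ
  ha : ∀ i, 0 ≤ a i
  hab : ∀ i, a i < b i
  hb : ∀ i, b i ≤ 1
  hc : ∀ i, 0 ≤ c i
  hcd : ∀ i, c i < d i
  hd : ∀ i, d i ≤ 1
  disj : ∀ i j, i ≠ j →
    Disjoint (Ioo (a i) (b i) ×ˢ Ioo (c i) (d i)) (Ioo (a j) (b j) ×ˢ Ioo (c j) (d j))

/-- The Dyachenko–Waterman rectangular variation `Λ* V (f)`. -/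
def rectV (Λ : ℕ → ℝ) (f : ℝ → ℝ → ℝ) : ℝ≥0∞ :=
  ⨆ (n : ℕ) (R : RectPack n), ∑ i : Fin n, ENNReal.ofReal
    (|f (R.a i) (R.c i) - f (R.a i) (R.d i) - f (R.b i) (R.c i) + f (R.b i) (R.d i)| /
      Λ (i.1 + 1))

/-- `q_N = 4^0 + 4^1 + ⋯ + 4^{N-1}`. -/
def qIdx (N : ℕ) : ℕ := ∑ k ∈ Finset.range N, 4 ^ k

/-- The tent function `φ_{N,j}` of height 1 on `[j 2^{-2N}, (j+1) 2^{-2N}]`. -/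
def tent (N j : ℕ) (x : ℝ) : ℝ :=
  max 0 (1 - |2 ^ (2 * N + 1) * x - (2 * j + 1)|)

/-- `φ_N = ∑_{j=1}^{2^{2N}-1} φ_{N,j}`. -/
def tentSum (N : ℕ) (x : ℝ) : ℝ :=
  ∑ j ∈ Finset.Icc 1 (2 ^ (2 * N) - 1), tent N j x

/-- `A_n^α = (α+1)(α+2)⋯(α+n)/n!`. -/
def Acoef (α : ℝ) (n : ℕ) : ℝ :=
  (∏ k ∈ Finset.range n, (α + k + 1)) / n.factorial

/-- The Cesàro `(C,α)` kernel for the Walsh system. -/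
def cesaroKernel (α : ℝ) (n : ℕ) (x : ℝ) : ℝ :=
  (Acoef α (n - 1))⁻¹ * ∑ k ∈ Finset.Icc 1 n, Acoef (α - 1) (n - k) * walshDirichlet k x

/-- The `(n,m)`-th Walsh–Fourier coefficient of `f`. -/
def fourierCoef (f : ℝ → ℝ → ℝ) (n m : ℕ) : ℝ :=
  ∫ x in (0:ℝ)..1, ∫ y in (0:ℝ)..1, f x y * walsh n x * walsh m y

/-- The rectangular partial sums of the double Walsh–Fourier series of `f`. -/
def partialSum (f : ℝ → ℝ → ℝ) (M N : ℕ) (x y : ℝ) : ℝ :=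
  ∑ m ∈ Finset.range M, ∑ n ∈ Finset.range N, fourierCoef f m n * walsh m x * walsh n y

/-- The Cesàro `(C;α,β)` means of the double Walsh–Fourier series of `f`. -/
def cesaroMean (α β : ℝ) (n m : ℕ) (f : ℝ → ℝ → ℝ) (x y : ℝ) : ℝ :=
  (Acoef α (n - 1) * Acoef β (m - 1))⁻¹ *
    ∑ i ∈ Finset.Icc 1 n, ∑ j ∈ Finset.Icc 1 m,
      Acoef (α - 1) (n - i) * Acoef (β - 1) (m - j) * partialSum f i j x y

/-- The sup norm of `f` over `[0,1]²` (in `ℝ≥0∞`). -/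
def supNorm (f : ℝ → ℝ → ℝ) : ℝ≥0∞ :=
  ⨆ (x : Icc (0:ℝ) 1) (y : Icc (0:ℝ) 1), ENNReal.ofReal |f x y|

/-- The norm `‖f‖_C + Λ^# V (f)` on `C ∩ Λ^# BV` (in `ℝ≥0∞`). -/
def bvNorm (Λ : ℕ → ℝ) (f : ℝ → ℝ → ℝ) : ℝ≥0∞ :=
  supNorm f + sharpV Λ 0 f

end

/-!
Write `w n = λ_{n+1}` and, for a region `G` of tagged intervals, let `L(G)` be the limit as
`m → ∞` of the shifted variation `Λ_m^#V₁(f)` over packs in `G`. The mass `L(inside v)` of an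
interval is superadditive over nonoverlapping intervals, and excluding `v` from a region lowers
`L` by at most the mass of `v`: at most two members of a pack straddle an endpoint of `v`, and
their terms vanish as `m → ∞` because the increments of `f` are bounded.

Suppose `L = L(all) > 0`. Take a pack with sum `> L/4` at a late shift, sort it decreasingly and
keep from each block of `B = 2^E` consecutive members the one of least mass. Moved to
consecutive early slots, the kept members gain the factor `q^E` from `λ_{2n} ≥ q λ_n`, and they
carry at most a `1/B` share of the mass. Repeat this `K = B / 2^g` times, each time outside the
intervals already chosen: the region left still carries limit variation `≥ L/2`, since the mass
used up is at most `K Λ^#V₁(f) / B ≤ L/2` for a suitable fixed `g`. Concatenating the extracted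
packs gives one pack whose `Λ^#`-sum is of order `q^E L / 2^g`, which exceeds `Λ^#V₁(f)` once
`E` is large.
-/

open Topology

section WeightedSum

variable {α : Type*} {w : ℕ → ℝ} {d : α → ℝ}

variable (w d) in
noncomputable def weightedSum : ℕ → List α → ℝ
  | _, [] => 0
  | m, u :: xs => d u / w m + weightedSum (m + 1) xs

@[simp]
lemma weightedSum_nil (m : ℕ) : weightedSum w d m [] = 0 := rfl

@[simp]
lemma weightedSum_cons (m : ℕ) (u : α) (xs : List α) :
    weightedSum w d m (u :: xs) = d u / w m + weightedSum w d (m + 1) xs := rfl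

lemma weightedSum_append (m : ℕ) (xs ys : List α) :
    weightedSum w d m (xs ++ ys) = weightedSum w d m xs + weightedSum w d (m + xs.length) ys := by
  induction xs generalizing m with
  | nil => simp
  | cons u xs ih => simp [ih, add_assoc, add_comm 1]

lemma weightedSum_ofFn (m : ℕ) {n : ℕ} (g : Fin n → α) :
    weightedSum w d m (List.ofFn g) = ∑ i : Fin n, d (g i) / w (m + i) := by
  induction n generalizing m with
  | zero => simp
  | succ n ih =>
    simp only [List.ofFn_succ, weightedSum_cons, ih, Fin.sum_univ_succ, Fin.val_zero, add_zero,
      Fin.val_succ, add_assoc, add_comm 1]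

lemma weightedSum_nonneg (hw0 : ∀ n, 0 < w n) (hd : ∀ u, 0 ≤ d u) (m : ℕ) (xs : List α) :
    0 ≤ weightedSum w d m xs := by
  induction xs generalizing m with
  | nil => simp
  | cons u xs ih => exact add_nonneg (div_nonneg (hd u) (hw0 m).le) (ih _)

lemma weightedSum_anti (hw : Monotone w) (hw0 : ∀ n, 0 < w n) (hd : ∀ u, 0 ≤ d u)
    (xs : List α) : Antitone (weightedSum w d · xs) := by
  intro m m' hmm'
  induction xs generalizing m m' with
  | nil => simp
  | cons u xs ih =>
    simp only [weightedSum_cons]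
    gcongr
    exacts [hd u, hw0 m, hw hmm', ih (by omega)]

lemma weightedSum_le_length_mul (hw : Monotone w) (hw0 : ∀ n, 0 < w n) {M : ℝ} (hM : 0 ≤ M)
    (m : ℕ) {xs : List α} (hxs : ∀ u ∈ xs, d u ≤ M) :
    weightedSum w d m xs ≤ xs.length * (M / w m) := by
  induction xs generalizing m with
  | nil => simp
  | cons u xs ih =>
    have hu : d u / w m ≤ M / w m := by gcongr; exacts [(hw0 m).le, hxs u (by simp)]
    have hxs' : weightedSum w d (m + 1) xs ≤ xs.length * (M / w m) :=
      (ih (m + 1) fun v hv => hxs v (by simp [hv])).trans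
        (by gcongr; exacts [hw0 m, hw m.le_succ])
    simp only [weightedSum_cons, List.length_cons, Nat.cast_succ]
    linarith

lemma weightedSum_le_mul_add_drop (hw : Monotone w) (hw0 : ∀ n, 0 < w n) {M : ℝ} (hM : 0 ≤ M)
    (k m : ℕ) {xs : List α} (hxs : ∀ u ∈ xs, d u ≤ M) :
    weightedSum w d k xs ≤ m * (M / w k) + weightedSum w d (k + m) (xs.drop m) := by
  induction m generalizing k xs with
  | zero => simp
  | succ m ih =>
    cases xs with
    | nil =>
      have := div_nonneg hM (hw0 k).le
      simp only [weightedSum_nil, List.drop_nil, add_zero]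
      positivity
    | cons u xs =>
      have hu : d u / w k ≤ M / w k := by gcongr; exacts [(hw0 k).le, hxs u (by simp)]
      have hrest := ih (k + 1) (xs := xs) fun v hv => hxs v (by simp [hv])
      have hMk : M / w (k + 1) ≤ M / w k := by gcongr; exacts [hw0 k, hw k.le_succ]
      rw [List.drop_succ_cons, show k + (m + 1) = k + 1 + m by omega]
      simp only [weightedSum_cons, Nat.cast_succ]
      nlinarith [m.cast_nonneg (α := ℝ)]

lemma weightedSum_le_filter_add_filter (hw : Monotone w) (hw0 : ∀ n, 0 < w n)
    (hd : ∀ u, 0 ≤ d u) (p : α → Bool) (m : ℕ) (xs : List α) :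
    weightedSum w d m xs ≤
      weightedSum w d m (xs.filter p) + weightedSum w d m (xs.filter (!p ·)) := by
  induction xs generalizing m with
  | nil => simp
  | cons u xs ih =>
    have h₁ := weightedSum_anti hw hw0 hd (xs.filter p) m.le_succ
    have h₂ := weightedSum_anti hw hw0 hd (xs.filter (!p ·)) m.le_succ
    have h₃ := ih (m + 1)
    cases hp : p u <;> simp [hp] <;> linarith

/-- The exchange step of the rearrangement inequality: moving `y` in front of the list `s`
of smaller terms does not decrease the sum. -/
lemma weightedSum_append_cons_le (hw : Monotone w) (hw0 : ∀ n, 0 < w n) {y : α} (m : ℕ)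
    {s : List α} (hs : ∀ z ∈ s, d z ≤ d y) :
    weightedSum w d m s + d y / w (m + s.length) ≤ d y / w m + weightedSum w d (m + 1) s := by
  induction s generalizing m with
  | nil => simp
  | cons z s ih =>
    have hih := ih (m + 1) fun z hz => hs z (by simp [hz])
    have hz : (d y - d z) / w (m + 1) ≤ (d y - d z) / w m := by
      gcongr
      exacts [sub_nonneg.2 (hs z (by simp)), hw0 m, hw m.le_succ]
    simp only [weightedSum_cons, List.length_cons, sub_div] at hih hz ⊢
    rw [show m + (s.length + 1) = m + 1 + s.length by omega]
    linarith

lemma weightedSum_le_of_perm_of_pairwise (hw : Monotone w) (hw0 : ∀ n, 0 < w n)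
    {xs ys : List α} (hperm : xs.Perm ys) (hsort : ys.Pairwise fun u v => d v ≤ d u)
    (m : ℕ) : weightedSum w d m xs ≤ weightedSum w d m ys := by
  induction ys generalizing xs m with
  | nil => simp [hperm.eq_nil]
  | cons y ys ih =>
    obtain ⟨s, t, rfl⟩ := List.append_of_mem (hperm.mem_iff.2 List.mem_cons_self)
    have hperm' : (s ++ t).Perm ys := (List.perm_middle.symm.trans hperm).cons_inv
    have hs : ∀ z ∈ s, d z ≤ d y := fun z hz =>
      List.rel_of_pairwise_cons hsort (hperm'.subset (List.mem_append_left t hz))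
    have hmove := weightedSum_append_cons_le hw hw0 m hs
    have hrest := ih hperm' (List.pairwise_cons.1 hsort).2 (m + 1)
    simp only [weightedSum_append, weightedSum_cons] at hrest ⊢
    rw [show m + s.length + 1 = m + 1 + s.length by omega]
    linarith

lemma exists_perm_pairwise_antitone (d : α → ℝ) (xs : List α) :
    ∃ ys, xs.Perm ys ∧ ys.Pairwise fun u v => d v ≤ d u := by
  classical
  refine ⟨xs.mergeSort fun u v => decide (d v ≤ d u), (List.mergeSort_perm _ _).symm, ?_⟩
  simpa using List.pairwise_mergeSort (le := fun u v => decide (d v ≤ d u))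
    (fun a b c hab hbc => by simp only [decide_eq_true_eq] at *; linarith)
    (fun a b => by simpa using le_total (d b) (d a)) xs

lemma length_mul_le_sum_map {l : List α} {μ : α → ℝ≥0∞} {a : ℝ≥0∞} (h : ∀ x ∈ l, a ≤ μ x) :
    l.length * a ≤ (l.map μ).sum := by
  simpa only [List.map_const', List.sum_replicate, nsmul_eq_mul] using
    List.sum_le_sum (f := fun _ => a) h

/-- Cut a decreasingly sorted list into blocks of length `B` and keep from each full block its
element of least `μ`. The kept element of a block dominates, in `d`, every later element; placing
it at the slot `R + j` instead of `p + (j + 1) B` gains the factor `c` provided by `hdb`. -/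
lemma exists_sublist_block_select (hw : Monotone w) (hw0 : ∀ n, 0 < w n) (hd : ∀ u, 0 ≤ d u)
    {B : ℕ} (hB : 0 < B) {c : ℝ} (hc : 0 ≤ c) {n₀ : ℕ}
    (hdb : ∀ n k, n₀ ≤ n → B * (n + 1) ≤ k + 1 → c * w n ≤ w k) (μ : α → ℝ≥0∞) (zs : List α)
    (hzs : zs.Pairwise fun u v => d v ≤ d u) {M : ℝ} (hM : 0 ≤ M) (hdM : ∀ u ∈ zs, d u ≤ M)
    {p R : ℕ} (hR : n₀ ≤ R) (hRp : B * R ≤ p) :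
    ∃ ys, ys.Sublist zs ∧
      c * weightedSum w d p zs ≤ c * (B * (M / w p)) + B * weightedSum w d R ys ∧
      B * (ys.map μ).sum ≤ (zs.map μ).sum := by
  obtain ⟨n, hn⟩ : ∃ n, zs.length = n := ⟨_, rfl⟩
  induction n using Nat.strong_induction_on generalizing zs M p R with
  | _ n ih =>
  by_cases hshort : zs.length ≤ B
  · refine ⟨[], List.nil_sublist _, ?_, by simp⟩
    have : weightedSum w d p zs ≤ B * (M / w p) :=
      (weightedSum_le_length_mul hw hw0 hM p hdM).trans
        (by gcongr; exact div_nonneg hM (hw0 p).le)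
    simp only [weightedSum_nil, mul_zero, add_zero]
    gcongr
  set blk := zs.take B
  set rest := zs.drop B
  have hblk : blk.length = B := by simp [blk]; omega
  have hzs_eq : zs = blk ++ rest := (List.take_append_drop B zs).symm
  obtain ⟨u, hu, humin⟩ := Set.exists_min_image {x | x ∈ blk} μ (List.finite_toSet blk)
    (List.exists_mem_of_length_pos (hblk ▸ hB))
  have hsorted := hzs_eq ▸ hzs
  rw [List.pairwise_append] at hsorted
  obtain ⟨ys, hys, hval, hmass⟩ := ih rest.length (by simp [rest]; omega) rest hsorted.2.1
    (hd u) (fun v hv => hsorted.2.2 u hu v hv) (R := R + 1) (p := p + B) (by omega)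
    (by linarith) rfl
  refine ⟨u :: ys, hzs_eq ▸ (List.singleton_sublist.2 hu).append hys, ?_, ?_⟩
  · have hgain : c * (B * (d u / w (p + B))) ≤ B * (d u / w R) := by
      have : c / w (p + B) ≤ 1 / w R := by
        rw [div_le_div_iff₀ (hw0 _) (hw0 _)]
        linarith [hdb R (p + B) hR (by linarith)]
      calc c * (B * (d u / w (p + B))) = B * (d u * (c / w (p + B))) := by ring
        _ ≤ B * (d u * (1 / w R)) := by gcongr; exact hd u
        _ = B * (d u / w R) := by ring
    have hhead : weightedSum w d p blk ≤ B * (M / w p) := by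
      have := weightedSum_le_length_mul hw hw0 hM p (xs := blk) fun v hv =>
        hdM v (List.mem_of_mem_take hv)
      rwa [hblk] at this
    rw [hzs_eq, weightedSum_append, hblk, weightedSum_cons]
    nlinarith
  · have := length_mul_le_sum_map fun x hx => humin x hx
    rw [hblk] at this
    rw [hzs_eq, List.map_append, List.sum_append, List.map_cons, List.sum_cons, mul_add]
    exact add_le_add this hmass

end WeightedSum

lemma List.Pairwise.length_le_one {α : Type*} {R : α → α → Prop} {l : List α}
    (hl : l.Pairwise R) (hR : ∀ x ∈ l, ∀ y ∈ l, ¬ R x y) : l.length ≤ 1 := by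
  match l, hl with
  | [], _ | [_], _ => simp
  | x :: y :: _, hl =>
    exact absurd (List.rel_of_pairwise_cons hl (by simp)) (hR x (by simp) y (by simp))

structure TaggedInterval where
  left : ℝ
  right : ℝ
  tag : ℝ

namespace TaggedInterval

def IsAdmissible (u : TaggedInterval) : Prop :=
  0 ≤ u.left ∧ u.left < u.right ∧ u.right ≤ 1 ∧ u.tag ∈ Ico (0 : ℝ) 1

def incr (f : ℝ → ℝ → ℝ) (u : TaggedInterval) : ℝ := |f u.right u.tag - f u.left u.tag|

lemma incr_nonneg (f : ℝ → ℝ → ℝ) (u : TaggedInterval) : 0 ≤ incr f u := abs_nonneg _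

lemma nonneg_of_forall_incr_le {f : ℝ → ℝ → ℝ} {M : ℝ}
    (hM : ∀ u : TaggedInterval, u.IsAdmissible → incr f u ≤ M) : 0 ≤ M :=
  (incr_nonneg f ⟨0, 1, 0⟩).trans (hM _ ⟨le_rfl, one_pos, le_rfl, le_rfl, one_pos⟩)

def Disj (u v : TaggedInterval) : Prop := Disjoint (Ioo u.left u.right) (Ioo v.left v.right)

lemma Disj.symm {u v : TaggedInterval} (h : Disj u v) : Disj v u := Disjoint.symm h

def IsWithin (u v : TaggedInterval) : Prop := v.left ≤ u.left ∧ u.right ≤ v.right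

lemma IsWithin.disj {u v z : TaggedInterval} (h : u.IsWithin v) (hv : Disj v z) : Disj u z :=
  hv.mono_left (Ioo_subset_Ioo h.1 h.2)

def Avoids (F : List TaggedInterval) (u : TaggedInterval) : Prop := ∀ v ∈ F, Disj u v

@[simp]
lemma avoids_nil : Avoids [] = fun _ => True := funext fun _ => by simp [Avoids]

lemma avoids_append {F F' : List TaggedInterval} {u : TaggedInterval} :
    Avoids (F ++ F') u ↔ Avoids F u ∧ Avoids F' u := by
  simp only [Avoids, List.mem_append, or_imp, forall_and]

lemma length_le_one_of_forall_mem_ioo (x : ℝ) {l : List TaggedInterval} (hl : l.Pairwise Disj)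
    (hx : ∀ u ∈ l, x ∈ Ioo u.left u.right) : l.length ≤ 1 :=
  hl.length_le_one fun u hu v hv h => disjoint_left.1 h (hx u hu) (hx v hv)

lemma left_mem_ioo_or_right_mem_ioo {u v : TaggedInterval} (hd : ¬ Disj u v)
    (hw : ¬ u.IsWithin v) : v.left ∈ Ioo u.left u.right ∨ v.right ∈ Ioo u.left u.right := by
  obtain ⟨x, hxu, hxv⟩ := not_disjoint_iff.1 hd
  simp only [IsWithin, not_and_or, not_le] at hw
  rcases hw with h | h
  · exact .inl ⟨h, hxv.1.trans hxu.2⟩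
  · exact .inr ⟨hxu.1.trans hxv.2, h⟩

lemma length_le_two_of_straddle (v : TaggedInterval) {l : List TaggedInterval}
    (hl : l.Pairwise Disj) (hbad : ∀ u ∈ l, ¬ Disj u v ∧ ¬ u.IsWithin v) : l.length ≤ 2 := by
  classical
  let p : TaggedInterval → Bool := fun u => decide (v.left ∈ Ioo u.left u.right)
  rw [List.length_eq_length_filter_add p]
  have h₁ := length_le_one_of_forall_mem_ioo v.left (hl.filter p) fun u hu => by
    simpa [p] using (List.mem_filter.1 hu).2
  have h₂ := length_le_one_of_forall_mem_ioo v.right (hl.filter (!p ·)) fun u hu => by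
    obtain ⟨hu, hleft⟩ := List.mem_filter.1 hu
    simp only [p, Bool.not_eq_true', decide_eq_false_iff_not] at hleft
    exact (left_mem_ioo_or_right_mem_ioo (hbad u hu).1 (hbad u hu).2).resolve_left hleft
  omega

end TaggedInterval

open TaggedInterval

def IsPack (xs : List TaggedInterval) : Prop := xs.Pairwise Disj ∧ ∀ u ∈ xs, u.IsAdmissible

lemma isPack_nil : IsPack [] := ⟨List.Pairwise.nil, by simp⟩

lemma IsPack.sublist {xs ys : List TaggedInterval} (h : IsPack xs) (hys : ys.Sublist xs) :
    IsPack ys :=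
  ⟨h.1.sublist hys, fun u hu => h.2 u (hys.subset hu)⟩

lemma IsPack.perm {xs ys : List TaggedInterval} (h : IsPack xs) (hys : xs.Perm ys) :
    IsPack ys :=
  ⟨(hys.pairwise_iff fun h => h.symm).1 h.1, fun u hu => h.2 u (hys.mem_iff.2 hu)⟩

lemma IsPack.append {xs ys : List TaggedInterval} (hxs : IsPack xs) (hys : IsPack ys)
    (h : ∀ u ∈ ys, Avoids xs u) : IsPack (xs ++ ys) :=
  ⟨List.pairwise_append.2 ⟨hxs.1, hys.1, fun a ha u hu => (h u hu a ha).symm⟩,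
    fun u hu => (List.mem_append.1 hu).elim (hxs.2 u) (hys.2 u)⟩

def SharpPack.toList {n : ℕ} (P : SharpPack n) : List TaggedInterval :=
  List.ofFn fun i => ⟨P.a i, P.b i, P.y i⟩

lemma SharpPack.isPack_toList {n : ℕ} (P : SharpPack n) : IsPack P.toList := by
  refine ⟨List.pairwise_ofFn.2 fun i j hij => P.disj i j hij.ne, fun u hu => ?_⟩
  obtain ⟨i, rfl⟩ := List.mem_ofFn.1 hu
  exact ⟨P.ha i, P.hab i, P.hb i, P.hy i⟩

def IsPack.toSharpPack {xs : List TaggedInterval} (h : IsPack xs) : SharpPack xs.length where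
  a i := xs[i].left
  b i := xs[i].right
  y i := xs[i].tag
  ha i := (h.2 _ (List.getElem_mem _)).1
  hab i := (h.2 _ (List.getElem_mem _)).2.1
  hb i := (h.2 _ (List.getElem_mem _)).2.2.1
  hy i := (h.2 _ (List.getElem_mem _)).2.2.2
  disj i j hij := by
    rcases Fin.lt_or_lt_of_ne hij with hij | hij
    · exact List.pairwise_iff_getElem.1 h.1 i j i.2 j.2 hij
    · exact (List.pairwise_iff_getElem.1 h.1 j i j.2 i.2 hij).symm

lemma IsPack.toList_toSharpPack {xs : List TaggedInterval} (h : IsPack xs) :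
    h.toSharpPack.toList = xs :=
  List.ext_get (by simp [SharpPack.toList]) fun i _ _ => by simp [SharpPack.toList, toSharpPack]

lemma sharpSum_eq_weightedSum {Λ : ℕ → ℝ} (hΛ : ∀ n, 0 < Λ (n + 1)) (m : ℕ)
    (f : ℝ → ℝ → ℝ) {n : ℕ} (P : SharpPack n) :
    sharpSum Λ m f P = ENNReal.ofReal (weightedSum (fun n => Λ (n + 1)) (incr f) m P.toList) := by
  rw [SharpPack.toList, weightedSum_ofFn, ENNReal.ofReal_sum_of_nonneg fun i _ =>
    div_nonneg (incr_nonneg f _) (hΛ _).le]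
  rfl

section PackVariation

variable {w : ℕ → ℝ} {f : ℝ → ℝ → ℝ}

variable (w f) in
/-- `Λ_m^#V₁(f)` restricted to packs in the region `G`, for the weights `w n = λ_{n+1}`. -/
noncomputable def packVar (G : TaggedInterval → Prop) (m : ℕ) : ℝ≥0∞ :=
  ⨆ (xs : List TaggedInterval) (_ : IsPack xs ∧ ∀ u ∈ xs, G u),
    ENNReal.ofReal (weightedSum w (incr f) m xs)

variable (w f) in
noncomputable def limVar (G : TaggedInterval → Prop) : ℝ≥0∞ := ⨅ m, packVar w f G m

variable (w f) in
noncomputable def mass (v : TaggedInterval) : ℝ≥0∞ := limVar w f (·.IsWithin v)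

lemma le_packVar {G : TaggedInterval → Prop} {xs : List TaggedInterval} (hxs : IsPack xs)
    (hG : ∀ u ∈ xs, G u) (m : ℕ) :
    ENNReal.ofReal (weightedSum w (incr f) m xs) ≤ packVar w f G m :=
  le_iSup₂_of_le (f := fun xs (_ : IsPack xs ∧ ∀ u ∈ xs, G u) => _) xs ⟨hxs, hG⟩ le_rfl

lemma exists_lt_weightedSum_of_lt_packVar {G : TaggedInterval → Prop} {m : ℕ} {a : ℝ≥0∞}
    (h : a < packVar w f G m) :
    ∃ xs, IsPack xs ∧ (∀ u ∈ xs, G u) ∧ a < ENNReal.ofReal (weightedSum w (incr f) m xs) := by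
  simp only [packVar, lt_iSup_iff] at h
  obtain ⟨xs, ⟨hxs, hG⟩, h⟩ := h
  exact ⟨xs, hxs, hG, h⟩

lemma packVar_add_le {G : TaggedInterval → Prop} {m : ℕ} {a b : ℝ≥0∞}
    (h : ∀ xs, IsPack xs → (∀ u ∈ xs, G u) →
      ENNReal.ofReal (weightedSum w (incr f) m xs) + a ≤ b) :
    packVar w f G m + a ≤ b := by
  rw [packVar, ENNReal.biSup_add' ⟨[], isPack_nil, by simp⟩]
  exact iSup₂_le fun xs hxs => h xs hxs.1 hxs.2

lemma packVar_mono {G G' : TaggedInterval → Prop} (h : ∀ u, G u → G' u) (m : ℕ) :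
    packVar w f G m ≤ packVar w f G' m :=
  iSup₂_le fun _ hxs => le_packVar hxs.1 (fun u hu => h u (hxs.2 u hu)) m

lemma packVar_anti (hw : Monotone w) (hw0 : ∀ n, 0 < w n) (G : TaggedInterval → Prop) :
    Antitone (packVar w f G) := fun _ _ hmm' =>
  iSup₂_le fun xs hxs => (ENNReal.ofReal_le_ofReal
    (weightedSum_anti hw hw0 (incr_nonneg f) xs hmm')).trans (le_packVar hxs.1 hxs.2 _)

lemma limVar_le_packVar (G : TaggedInterval → Prop) (m : ℕ) : limVar w f G ≤ packVar w f G m :=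
  iInf_le _ m

lemma limVar_le_packVar_zero (G : TaggedInterval → Prop) :
    limVar w f G ≤ packVar w f (fun _ => True) 0 :=
  (limVar_le_packVar G 0).trans (packVar_mono (fun _ _ => trivial) 0)

lemma sharpV1_eq_packVar {Λ : ℕ → ℝ} (hΛ : ∀ n, 0 < Λ (n + 1)) (m : ℕ) (f : ℝ → ℝ → ℝ) :
    sharpV1 Λ m f = packVar (fun n => Λ (n + 1)) f (fun _ => True) m := by
  refine le_antisymm (iSup₂_le fun n P => ?_) (iSup₂_le fun xs hxs => ?_)
  · rw [sharpSum_eq_weightedSum hΛ]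
    exact le_packVar P.isPack_toList (fun _ _ => trivial) m
  · rw [← hxs.1.toList_toSharpPack, ← sharpSum_eq_weightedSum hΛ]
    exact le_iSup₂ (f := fun n (P : SharpPack n) => sharpSum Λ m f P) _ _

lemma incr_le_of_packVar_ne_top (hw0 : ∀ n, 0 < w n) {m : ℕ}
    (hfin : packVar w f (fun _ => True) m ≠ ⊤) {u : TaggedInterval} (hu : u.IsAdmissible) :
    incr f u ≤ (packVar w f (fun _ => True) m).toReal * w m := by
  have hpack : IsPack [u] := ⟨List.pairwise_singleton _ _, by simpa using hu⟩
  have h := (ENNReal.ofReal_le_iff_le_toReal hfin).1 (le_packVar hpack (by simp) m)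
  rwa [weightedSum_cons, weightedSum_nil, add_zero, div_le_iff₀ (hw0 m)] at h

lemma packVar_zero_ne_top (hw : Monotone w) (hw0 : ∀ n, 0 < w n) {m : ℕ}
    (hm : packVar w f (fun _ => True) m ≠ ⊤) : packVar w f (fun _ => True) 0 ≠ ⊤ := by
  set M := (packVar w f (fun _ => True) m).toReal * w m
  have hM : ∀ u, u.IsAdmissible → incr f u ≤ M := fun u hu => incr_le_of_packVar_ne_top hw0 hm hu
  refine ne_top_of_le_ne_top (b := ENNReal.ofReal (m * (M / w 0)) + packVar w f (fun _ => True) m)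
    (by finiteness) (iSup₂_le fun xs hxs => ?_)
  have hsplit := weightedSum_le_mul_add_drop hw hw0 (nonneg_of_forall_incr_le hM) 0 m
    fun u hu => hM u (hxs.1.2 u hu)
  rw [zero_add] at hsplit
  calc ENNReal.ofReal (weightedSum w (incr f) 0 xs)
      ≤ ENNReal.ofReal (m * (M / w 0) + weightedSum w (incr f) m (xs.drop m)) :=
        ENNReal.ofReal_le_ofReal hsplit
    _ ≤ _ := ENNReal.ofReal_add_le.trans <| by
        gcongr
        exact le_packVar (hxs.1.sublist (List.drop_sublist _ _)) (fun _ _ => trivial) m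

/-- Packs inside the members of `xs` can be concatenated, each shifted past the previous ones. -/
lemma sum_map_mass_le_packVar (hw0 : ∀ n, 0 < w n) {xs : List TaggedInterval}
    (hxs : xs.Pairwise Disj) (m : ℕ) :
    (xs.map (mass w f)).sum ≤ packVar w f (fun z => ∃ u ∈ xs, z.IsWithin u) m := by
  induction xs generalizing m with
  | nil => simp
  | cons u xs ih =>
    rw [List.map_cons, List.sum_cons]
    refine (add_le_add_left (limVar_le_packVar _ m) _).trans (packVar_add_le fun zs hzs hzu => ?_)
    refine (add_le_add_right (ih hxs.of_cons (m + zs.length)) _).trans ?_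
    rw [add_comm]
    refine packVar_add_le fun ys hys hyx => ?_
    have hzs_nn := weightedSum_nonneg hw0 (incr_nonneg f) m zs
    have hys_nn := weightedSum_nonneg hw0 (incr_nonneg f) (m + zs.length) ys
    rw [add_comm, ← ENNReal.ofReal_add hzs_nn hys_nn, ← weightedSum_append]
    refine le_packVar (hzs.append hys fun y hy z hz => ?_) (fun z hz => ?_) m
    · obtain ⟨u', hu', hyu'⟩ := hyx y hy
      exact hyu'.disj ((hzu z hz).disj (List.rel_of_pairwise_cons hxs hu')).symm
    · rcases List.mem_append.1 hz with hz | hz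
      · exact ⟨u, List.mem_cons_self, hzu z hz⟩
      · obtain ⟨u', hu', hzu'⟩ := hyx z hz
        exact ⟨u', List.mem_cons_of_mem u hu', hzu'⟩

lemma sum_map_mass_le_limVar (hw0 : ∀ n, 0 < w n) {F xs : List TaggedInterval}
    (hxs : xs.Pairwise Disj) (hF : ∀ u ∈ xs, Avoids F u) :
    (xs.map (mass w f)).sum ≤ limVar w f (Avoids F) :=
  le_iInf fun m => (sum_map_mass_le_packVar hw0 hxs m).trans <| packVar_mono
    (fun _ ⟨u, hu, hzu⟩ v hv => hzu.disj (hF u hu v hv)) m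

/-- Split a pack into the members disjoint from `v`, those inside `v`, and at most two that
straddle an endpoint of `v`. -/
lemma packVar_avoids_le (hw : Monotone w) (hw0 : ∀ n, 0 < w n) {M : ℝ}
    (hM : ∀ u, u.IsAdmissible → incr f u ≤ M) (F : List TaggedInterval) (v : TaggedInterval)
    (m : ℕ) :
    packVar w f (Avoids F) m ≤ packVar w f (Avoids (F ++ [v])) m +
      packVar w f (·.IsWithin v) m + ENNReal.ofReal (2 * (M / w m)) := by
  classical
  refine iSup₂_le fun xs ⟨hxs, hF⟩ => ?_
  let ys := xs.filter fun u => !decide (Disj u v)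
  let bad := ys.filter fun u => !decide (u.IsWithin v)
  have hys : ys.Sublist xs := List.filter_sublist
  have hbad : bad.Sublist xs := List.filter_sublist.trans hys
  have hsplit₁ :=
    weightedSum_le_filter_add_filter hw hw0 (incr_nonneg f) (decide <| Disj · v) m xs
  have hsplit₂ :=
    weightedSum_le_filter_add_filter hw hw0 (incr_nonneg f) (decide <| ·.IsWithin v) m ys
  have hstraddle : weightedSum w (incr f) m bad ≤ 2 * (M / w m) := by
    have hlen : bad.length ≤ 2 := length_le_two_of_straddle v (hxs.1.sublist hbad) fun u hu => by
      simp only [bad, ys, List.mem_filter, Bool.not_eq_true', decide_eq_false_iff_not] at hu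
      exact ⟨hu.1.2, hu.2⟩
    refine (weightedSum_le_length_mul hw hw0 (nonneg_of_forall_incr_le hM) m fun u hu =>
      hM u (hxs.2 u (hbad.subset hu))).trans ?_
    gcongr
    · exact div_nonneg (nonneg_of_forall_incr_le hM) (hw0 m).le
    · exact_mod_cast hlen
  have hnn := weightedSum_nonneg hw0 (incr_nonneg f) m
  calc ENNReal.ofReal (weightedSum w (incr f) m xs)
      ≤ ENNReal.ofReal (weightedSum w (incr f) m (xs.filter (decide <| Disj · v))) +
        ENNReal.ofReal (weightedSum w (incr f) m (ys.filter (decide <| ·.IsWithin v))) +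
        ENNReal.ofReal (2 * (M / w m)) := by
        rw [← ENNReal.ofReal_add (hnn _) (hnn _),
          ← ENNReal.ofReal_add (add_nonneg (hnn _) (hnn _)) ((hnn _).trans hstraddle)]
        exact ENNReal.ofReal_le_ofReal (by linarith)
    _ ≤ _ := by
      gcongr
      · refine le_packVar (hxs.sublist List.filter_sublist) (fun u hu => ?_) m
        simp only [List.mem_filter, decide_eq_true_eq] at hu
        exact avoids_append.2 ⟨hF u hu.1, by simpa [Avoids] using hu.2⟩
      · refine le_packVar (hxs.sublist (List.filter_sublist.trans hys)) (fun u hu => ?_) m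
        simpa using (List.mem_filter.1 hu).2

lemma iInf_le_iInf_add_iInf {a b c e : ℕ → ℝ≥0∞} (hb : Antitone b) (hc : Antitone c)
    (he : Tendsto e atTop (𝓝 0)) (h : ∀ m, a m ≤ b m + c m + e m) :
    ⨅ m, a m ≤ (⨅ m, b m) + ⨅ m, c m := by
  simpa using ge_of_tendsto' (((tendsto_atTop_iInf hb).add (tendsto_atTop_iInf hc)).add he)
    fun m => (iInf_le a m).trans (h m)

lemma limVar_avoids_le (hw : Monotone w) (hw0 : ∀ n, 0 < w n) (htop : Tendsto w atTop atTop)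
    {M : ℝ} (hM : ∀ u, u.IsAdmissible → incr f u ≤ M) (F : List TaggedInterval)
    (v : TaggedInterval) :
    limVar w f (Avoids F) ≤ limVar w f (Avoids (F ++ [v])) + mass w f v := by
  refine iInf_le_iInf_add_iInf (packVar_anti hw hw0 _) (packVar_anti hw hw0 _) ?_
    (packVar_avoids_le hw hw0 hM F v)
  simpa using ENNReal.tendsto_ofReal ((tendsto_const_nhds.div_atTop htop).const_mul 2)

lemma limVar_avoids_le_add_sum (hw : Monotone w) (hw0 : ∀ n, 0 < w n)
    (htop : Tendsto w atTop atTop) {M : ℝ} (hM : ∀ u, u.IsAdmissible → incr f u ≤ M)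
    (F ys : List TaggedInterval) :
    limVar w f (Avoids F) ≤ limVar w f (Avoids (F ++ ys)) + (ys.map (mass w f)).sum := by
  induction ys generalizing F with
  | nil => simp
  | cons y ys ih =>
    calc limVar w f (Avoids F) ≤ limVar w f (Avoids (F ++ [y])) + mass w f y :=
          limVar_avoids_le hw hw0 htop hM F y
      _ ≤ limVar w f (Avoids (F ++ [y] ++ ys)) + (ys.map (mass w f)).sum + mass w f y := by
          gcongr; exact ih _
      _ = _ := by simp [add_assoc, add_comm (mass w f y)]

lemma ofReal_le_limVar_avoids (hw : Monotone w) (hw0 : ∀ n, 0 < w n)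
    (htop : Tendsto w atTop atTop) {M : ℝ} (hM : ∀ u, u.IsAdmissible → incr f u ≤ M) {x : ℝ}
    (hx0 : 0 ≤ x) (hx : ENNReal.ofReal (2 * x) ≤ limVar w f (fun _ => True))
    {F : List TaggedInterval} (hF : (F.map (mass w f)).sum ≤ ENNReal.ofReal x) :
    ENNReal.ofReal x ≤ limVar w f (Avoids F) := by
  have h := limVar_avoids_le_add_sum hw hw0 htop hM [] F
  rw [List.nil_append, avoids_nil] at h
  have h₂ : ENNReal.ofReal x + ENNReal.ofReal x ≤ limVar w f (Avoids F) + ENNReal.ofReal x := by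
    rw [← ENNReal.ofReal_add hx0 hx0, ← two_mul]
    exact hx.trans (h.trans (by gcongr))
  exact (ENNReal.add_le_add_iff_right ENNReal.ofReal_ne_top).1 h₂

/-- A near-optimal pack at a late shift, sorted and thinned out by
`exists_sublist_block_select`. -/
lemma exists_pack_avoids (hw : Monotone w) (hw0 : ∀ n, 0 < w n) (htop : Tendsto w atTop atTop)
    {M : ℝ} (hM : ∀ u, u.IsAdmissible → incr f u ≤ M) {B : ℕ} (hB : 0 < B) {c : ℝ} (hc : 0 ≤ c)
    {n₀ : ℕ} (hdb : ∀ n k, n₀ ≤ n → B * (n + 1) ≤ k + 1 → c * w n ≤ w k)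
    {F : List TaggedInterval} {x : ℝ} (hx : 0 < x)
    (hxF : ENNReal.ofReal x ≤ limVar w f (Avoids F)) {R : ℕ} (hR : n₀ ≤ R) :
    ∃ ys, IsPack ys ∧ (∀ u ∈ ys, Avoids F u) ∧
      c * x ≤ 4 * B * weightedSum w (incr f) R ys ∧
      B * (ys.map (mass w f)).sum ≤ limVar w f (Avoids F) := by
  obtain ⟨m, hRm, hmx⟩ : ∃ m, B * R ≤ m ∧ B * (M / w m) ≤ x / 4 := by
    have h : Tendsto (fun m => B * (M / w m)) atTop (𝓝 0) := by
      simpa using (tendsto_const_nhds.div_atTop htop).const_mul (B : ℝ)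
    exact ((eventually_ge_atTop _).and (h.eventually (ge_mem_nhds (by positivity)))).exists
  obtain ⟨xs, hxs, hxsF, hxsx⟩ := exists_lt_weightedSum_of_lt_packVar (m := m)
    ((ENNReal.ofReal_lt_ofReal_iff hx).2 (half_lt_self hx) |>.trans_le
      (hxF.trans (limVar_le_packVar _ m)))
  obtain ⟨zs, hperm, hsort⟩ := exists_perm_pairwise_antitone (incr f) xs
  obtain ⟨ys, hys, hval, hmass⟩ := exists_sublist_block_select hw hw0 (incr_nonneg f) hB hc hdb
    (mass w f) zs hsort (nonneg_of_forall_incr_le hM)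
    (fun u hu => hM u ((hxs.perm hperm).2 u hu)) hR hRm
  refine ⟨ys, (hxs.perm hperm).sublist hys,
    fun u hu => hxsF u (hperm.mem_iff.2 (hys.subset hu)), ?_, ?_⟩
  · have : x / 2 < weightedSum w (incr f) m zs :=
      (ENNReal.ofReal_lt_ofReal_iff'.1 hxsx).1.trans_le
        (weightedSum_le_of_perm_of_pairwise hw hw0 hperm hsort m)
    nlinarith
  · rw [← (hperm.map (mass w f)).sum_eq] at hmass
    exact hmass.trans (sum_map_mass_le_limVar hw0 hxs.1 hxsF)

/-- As long as the mass used up stays below `x`, the region avoiding the chosen intervals still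
carries limit variation `x`, so another pack can be appended at the next free slot. -/
lemma exists_pack_mul_le_weightedSum (hw : Monotone w) (hw0 : ∀ n, 0 < w n)
    (htop : Tendsto w atTop atTop) (hfin : packVar w f (fun _ => True) 0 ≠ ⊤) {B : ℕ}
    (hB : 0 < B) {c : ℝ} (hc : 0 ≤ c) {n₀ : ℕ}
    (hdb : ∀ n k, n₀ ≤ n → B * (n + 1) ≤ k + 1 → c * w n ≤ w k) {x : ℝ} (hx : 0 < x)
    (hℓ : ENNReal.ofReal (2 * x) ≤ limVar w f (fun _ => True)) {K : ℕ}
    (hK : K * packVar w f (fun _ => True) 0 ≤ B * ENNReal.ofReal x) :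
    ∃ Acc, IsPack Acc ∧ K * (c * x) ≤ 4 * B * weightedSum w (incr f) n₀ Acc := by
  set C := packVar w f (fun _ => True) 0
  have hM : ∀ u, u.IsAdmissible → incr f u ≤ C.toReal * w 0 := fun u hu =>
    incr_le_of_packVar_ne_top hw0 hfin hu
  have hB₀ : (B : ℝ≥0∞) ≠ 0 := by exact_mod_cast hB.ne'
  suffices ∀ k ≤ K, ∃ Acc, IsPack Acc ∧ k * (c * x) ≤ 4 * B * weightedSum w (incr f) n₀ Acc ∧
      B * (Acc.map (mass w f)).sum ≤ k * C from
    (this K le_rfl).imp fun _ h => ⟨h.1, h.2.1⟩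
  intro k
  induction k with
  | zero => exact fun _ => ⟨[], isPack_nil, by simp, by simp⟩
  | succ k ih =>
    intro hk
    obtain ⟨Acc, hAcc, hval, hmass⟩ := ih (by omega)
    have hmassx : (Acc.map (mass w f)).sum ≤ ENNReal.ofReal x := by
      refine (ENNReal.mul_le_mul_iff_right hB₀ (ENNReal.natCast_ne_top B)).1 ?_
      exact hmass.trans (le_trans (by gcongr; exact_mod_cast k.le_succ.trans hk) hK)
    obtain ⟨ys, hys, hysAcc, hysval, hysmass⟩ := exists_pack_avoids hw hw0 htop hM hB hc hdb hx
      (ofReal_le_limVar_avoids hw hw0 htop hM hx.le hℓ hmassx) (R := n₀ + Acc.length) (by omega)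
    refine ⟨Acc ++ ys, hAcc.append hys hysAcc, ?_, ?_⟩
    · rw [weightedSum_append]
      push_cast
      linarith
    · rw [List.map_append, List.sum_append, mul_add, Nat.cast_succ, add_one_mul]
      exact add_le_add hmass (hysmass.trans (limVar_le_packVar_zero _))

lemma pow_mul_le_of_doubling (hw : Monotone w) {q : ℝ} (hq : 0 ≤ q) {n₀ : ℕ}
    (hdb : ∀ n, n₀ ≤ n → q * w n ≤ w (2 * n + 1)) (E : ℕ) :
    ∀ n k, n₀ ≤ n → 2 ^ E * (n + 1) ≤ k + 1 → q ^ E * w n ≤ w k := by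
  induction E with
  | zero => exact fun n k _ hk => by simpa using hw (by omega : n ≤ k)
  | succ E ih =>
    intro n k hn hk
    have hk' : 2 ^ E * (2 * n + 1 + 1) ≤ k + 1 := by rw [pow_succ] at hk; linarith
    calc q ^ (E + 1) * w n = q ^ E * (q * w n) := by ring
      _ ≤ q ^ E * w (2 * n + 1) := by gcongr; exact hdb n hn
      _ ≤ w k := ih (2 * n + 1) k (by omega) hk'

lemma exists_pow_exponents (C : ℝ) {x q : ℝ} (hx : 0 < x) (hq : 1 < q) :
    ∃ g s : ℕ, C ≤ 2 ^ g * x ∧ 2 ^ (g + 2) * C < q ^ (s + g) * x := by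
  obtain ⟨g, hg⟩ := pow_unbounded_of_one_lt (C / x) one_lt_two
  obtain ⟨s, hs⟩ := pow_unbounded_of_one_lt (2 ^ (g + 2) * C / x) hq
  refine ⟨g, s, by rw [div_lt_iff₀ hx] at hg; linarith, (div_lt_iff₀ hx).1 hs |>.trans_le ?_⟩
  gcongr
  exacts [hq.le, by omega]

theorem limVar_eq_zero (hw : Monotone w) (hw0 : ∀ n, 0 < w n) (htop : Tendsto w atTop atTop)
    {q : ℝ} (hq : 1 < q) {n₀ : ℕ} (hdb : ∀ n, n₀ ≤ n → q * w n ≤ w (2 * n + 1))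
    (hfin : packVar w f (fun _ => True) 0 ≠ ⊤) :
    limVar w f (fun _ => True) = 0 := by
  set C := packVar w f (fun _ => True) 0
  by_contra hℓ
  have hℓC : limVar w f (fun _ => True) ≤ C := limVar_le_packVar _ 0
  set x := (limVar w f (fun _ => True)).toReal / 2
  have hx : 0 < x := half_pos (ENNReal.toReal_pos hℓ (ne_top_of_le_ne_top hfin hℓC))
  have h2x : ENNReal.ofReal (2 * x) ≤ limVar w f (fun _ => True) := by
    rw [mul_div_cancel₀ _ two_ne_zero, ENNReal.ofReal_toReal (ne_top_of_le_ne_top hfin hℓC)]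
  -- With `B = 2^(s+g)` and `K = 2^s`, the choice of `g` gives the budget `K C ≤ B x` and the
  -- choice of `s` makes the final pack's sum, at least `q^(s+g) x / 2^(g+2)`, exceed `C`.
  obtain ⟨g, s, hg, hs⟩ := exists_pow_exponents C.toReal hx hq
  have hK : ((2 ^ s : ℕ) : ℝ≥0∞) * C ≤ ((2 ^ (s + g) : ℕ) : ℝ≥0∞) * ENNReal.ofReal x := by
    rw [← ENNReal.ofReal_toReal hfin, ← ENNReal.ofReal_natCast, ← ENNReal.ofReal_natCast,
      ← ENNReal.ofReal_mul (by positivity), ← ENNReal.ofReal_mul (by positivity)]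
    refine ENNReal.ofReal_le_ofReal ?_
    push_cast
    rw [pow_add, mul_assoc]
    gcongr
  obtain ⟨Acc, hAcc, hval⟩ := exists_pack_mul_le_weightedSum hw hw0 htop hfin (by positivity)
    (by positivity) (pow_mul_le_of_doubling hw (by linarith) hdb (s + g)) hx h2x hK
  have hAccC : weightedSum w (incr f) n₀ Acc ≤ C.toReal :=
    (ENNReal.ofReal_le_iff_le_toReal hfin).1 ((le_packVar hAcc (fun _ _ => trivial) n₀).trans
      (packVar_anti hw hw0 _ (Nat.zero_le n₀)))
  have : (2 : ℝ) ^ s * (q ^ (s + g) * x) ≤ 2 ^ s * (2 ^ (g + 2) * C.toReal) := by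
    push_cast at hval
    calc _ ≤ 4 * 2 ^ (s + g) * weightedSum w (incr f) n₀ Acc := hval
      _ ≤ 4 * 2 ^ (s + g) * C.toReal := by gcongr
      _ = _ := by ring
  linarith [le_of_mul_le_mul_left this (by positivity)]

end PackVariation

lemma exists_doubling_of_one_lt_liminf {Λ : ℕ → ℝ} (hΛ : ∀ n, 0 < Λ (n + 1))
    (h : 1 < liminf (fun n => Λ (2 * (n + 1)) / Λ (n + 1)) atTop) :
    ∃ q, 1 < q ∧ ∃ n₀, ∀ n, n₀ ≤ n → q * Λ (n + 1) ≤ Λ (2 * (n + 1)) := by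
  obtain ⟨q, hq1, hq⟩ := exists_between h
  obtain ⟨n₀, hn₀⟩ := eventually_atTop.1 (eventually_lt_of_lt_liminf hq
    (isBoundedUnder_of ⟨0, fun n => (div_pos (hΛ _) (hΛ n)).le⟩))
  exact ⟨q, hq1, n₀, fun n hn => ((lt_div_iff₀ (hΛ n)).1 (hn₀ n hn)).le⟩

lemma tendsto_sharpV1_zero {Λ : ℕ → ℝ} (hΛ : Monotone fun n => Λ (n + 1))
    (hΛ0 : ∀ n, 0 < Λ (n + 1)) (htop : Tendsto (fun n => Λ (n + 1)) atTop atTop) {q : ℝ}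
    (hq : 1 < q) {n₀ : ℕ} (hdb : ∀ n, n₀ ≤ n → q * Λ (n + 1) ≤ Λ (2 * (n + 1)))
    {f : ℝ → ℝ → ℝ} (hfin : sharpV1 Λ 0 f ≠ ⊤) :
    Tendsto (fun m => sharpV1 Λ m f) atTop (𝓝 0) := by
  simp only [sharpV1_eq_packVar hΛ0] at hfin ⊢
  rw [← limVar_eq_zero hΛ hΛ0 htop hq (n₀ := n₀)
    (fun n hn => (hdb n hn).trans_eq (congrArg Λ (by ring))) hfin]
  exact tendsto_atTop_iInf (packVar_anti hΛ hΛ0 _)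

lemma sharpV1_zero_ne_top {Λ : ℕ → ℝ} (hΛ : Monotone fun n => Λ (n + 1))
    (hΛ0 : ∀ n, 0 < Λ (n + 1)) {f : ℝ → ℝ → ℝ} {m : ℕ} (hm : sharpV1 Λ m f ≠ ⊤) :
    sharpV1 Λ 0 f ≠ ⊤ := by
  rw [sharpV1_eq_packVar hΛ0] at hm ⊢
  exact packVar_zero_ne_top hΛ hΛ0 hm

theorem stmt0_general (Λ : ℕ → ℝ) (q : ℝ)
    (h1 : 1 < Λ 1) (hmono : ∀ n, 1 ≤ n → Λ n ≤ Λ (n + 1))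
    (htop : Tendsto Λ atTop atTop)
    (hliminf : Filter.liminf (fun n : ℕ => Λ (2 * (n + 1)) / Λ (n + 1)) atTop = q)
    (hq : 1 < q) :
    ∀ f : ℝ → ℝ → ℝ, SharpBV Λ f ↔ CSharpV Λ f := by
  intro f
  have hΛ : Monotone fun n => Λ (n + 1) := monotone_nat_of_le_succ fun n => hmono _ n.succ_pos
  have hΛ0 : ∀ n, 0 < Λ (n + 1) := fun n => one_pos.trans (h1.trans_le (hΛ n.zero_le))
  have htop' := htop.comp (tendsto_add_atTop_nat 1)
  obtain ⟨q', hq', n₀, hdb⟩ := exists_doubling_of_one_lt_liminf hΛ0 (hliminf ▸ hq)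
  unfold SharpBV CSharpV sharpV sharpV2
  rw [ENNReal.add_ne_top]
  constructor
  · rintro ⟨hf, hf'⟩
    simpa using (tendsto_sharpV1_zero hΛ hΛ0 htop' hq' hdb hf).add
      (tendsto_sharpV1_zero hΛ hΛ0 htop' hq' hdb hf')
  · intro hC
    obtain ⟨m, hm⟩ := (hC.eventually (gt_mem_nhds ENNReal.zero_lt_top)).exists
    obtain ⟨hf, hf'⟩ := ENNReal.add_ne_top.1 hm.ne
    exact ⟨sharpV1_zero_ne_top hΛ hΛ0 hf, sharpV1_zero_ne_top hΛ hΛ0 hf'⟩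

/-- If `Λ` is increasing with `λ₁ > 1`, `λ_n → ∞`, `∑ 1/λ_n = ∞` and
`liminf λ_{2n}/λ_n = q > 1`, then `Λ^# V = C Λ^# V`. -/
theorem stmt0 (Λ : ℕ → ℝ) (q : ℝ)
    (h1 : 1 < Λ 1) (hmono : ∀ n, 1 ≤ n → Λ n ≤ Λ (n + 1))
    (htop : Tendsto Λ atTop atTop)
    (hdiv : ¬ Summable (fun n : ℕ => 1 / Λ (n + 1)))
    (hliminf : Filter.liminf (fun n : ℕ => Λ (2 * (n + 1)) / Λ (n + 1)) atTop = q)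
    (hq : 1 < q) :
    ∀ f : ℝ → ℝ → ℝ, SharpBV Λ f ↔ CSharpV Λ f :=
  stmt0_general Λ q h1 hmono htop hliminf hq
end

section
/- If n has binary expansion n = ∑_{j≥0} n_j 2^j with n_j ∈ {0,1}, then D_n(t) = w_n(t) · ∑_{j≥0} n_j w_{2^j}(t) D_{2^j}(t) for all t ∈ [0,1). -/
open MeasureTheory Filter Set ENNReal

/-! Splitting off the leading binary digit, `n = 2^N + m` with `m < 2^N`, gives
`D_n = D_{2^N} + w_{2^N} D_m` and `w_n = w_{2^N} w_m`, so the identity follows by induction on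
the number of digits once one knows `w_m D_{2^N} = D_{2^N}`. That holds because
`D_{2^N} = ∏_{j<N} (1 + r_j)` while `w_m` is a product of some of the `r_j`, and
`r_j (1 + r_j) = 1 + r_j` since `r_j² = 1`. -/

open Finset

lemma r0_mul_self (x : ℝ) : r0 x * r0 x = 1 := by
  unfold r0; split <;> norm_num

lemma prod_range_ite_testBit_eq_of_lt_two_pow {M : Type*} [CommMonoid M] {k N N' : ℕ}
    (f : ℕ → M) (hk : k < 2 ^ N) (hN : N ≤ N') :
    ∏ j ∈ range N, (if k.testBit j then f j else 1) =
      ∏ j ∈ range N', (if k.testBit j then f j else 1) := by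
  refine prod_subset (range_subset_range.mpr hN) fun j _ hj => ?_
  have hj : N ≤ j := by simpa using hj
  rw [Nat.testBit_lt_two_pow (hk.trans_le (Nat.pow_le_pow_right two_pos hj)),
    if_neg Bool.false_ne_true]

lemma walsh_eq_prod_range {k N : ℕ} (hk : k < 2 ^ N) (x : ℝ) :
    walsh k x = ∏ j ∈ range N, if k.testBit j then r0 (2 ^ j * x) else 1 := by
  rw [walsh,
    prod_range_ite_testBit_eq_of_lt_two_pow _ Nat.lt_two_pow_self (Nat.le_add_right k N),
    prod_range_ite_testBit_eq_of_lt_two_pow _ hk (Nat.le_add_left N k)]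

lemma walsh_mul_self (k : ℕ) (x : ℝ) : walsh k x * walsh k x = 1 := by
  rw [walsh, ← prod_mul_distrib]
  refine prod_eq_one fun j _ => ?_
  split_ifs
  exacts [r0_mul_self _, one_mul 1]

lemma walsh_two_pow_add {k m : ℕ} (hm : m < 2 ^ k) (x : ℝ) :
    walsh (2 ^ k + m) x = walsh m x * r0 (2 ^ k * x) := by
  have hlt : 2 ^ k + m < 2 ^ (k + 1) := by rw [pow_succ]; omega
  rw [walsh_eq_prod_range hlt, walsh_eq_prod_range hm, prod_range_succ,
    Nat.testBit_two_pow_add_eq, Nat.testBit_lt_two_pow hm]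
  congr 1
  exact prod_congr rfl fun j hj => by rw [Nat.testBit_two_pow_add_gt (mem_range.mp hj)]

lemma walsh_two_pow (k : ℕ) (x : ℝ) : walsh (2 ^ k) x = r0 (2 ^ k * x) := by
  simpa [walsh] using walsh_two_pow_add (Nat.two_pow_pos k) x

lemma walshDirichlet_two_pow_add {k m : ℕ} (hm : m ≤ 2 ^ k) (x : ℝ) :
    walshDirichlet (2 ^ k + m) x =
      walshDirichlet (2 ^ k) x + walsh (2 ^ k) x * walshDirichlet m x := by
  rw [walshDirichlet, sum_range_add, walshDirichlet, walshDirichlet, mul_sum]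
  congr 1
  refine sum_congr rfl fun i hi => ?_
  rw [walsh_two_pow_add ((mem_range.mp hi).trans_le hm), walsh_two_pow, mul_comm]

lemma walshDirichlet_two_pow (k : ℕ) (x : ℝ) :
    walshDirichlet (2 ^ k) x = ∏ j ∈ range k, (1 + r0 (2 ^ j * x)) := by
  induction k with
  | zero => simp [walshDirichlet, walsh]
  | succ k ih =>
    rw [pow_succ, mul_two, walshDirichlet_two_pow_add le_rfl, ih, prod_range_succ,
      walsh_two_pow]
    ring

lemma walsh_mul_walshDirichlet_two_pow {m k : ℕ} (hm : m < 2 ^ k) (x : ℝ) :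
    walsh m x * walshDirichlet (2 ^ k) x = walshDirichlet (2 ^ k) x := by
  rw [walsh_eq_prod_range hm, walshDirichlet_two_pow, ← prod_mul_distrib]
  refine prod_congr rfl fun j _ => ?_
  split_ifs
  · linear_combination r0_mul_self (2 ^ j * x)
  · exact one_mul _

lemma walshDirichlet_eq_of_lt_two_pow (N : ℕ) (x : ℝ) : ∀ n < 2 ^ N,
    walshDirichlet n x = walsh n x * ∑ j ∈ range N,
      (if n.testBit j then walsh (2 ^ j) x * walshDirichlet (2 ^ j) x else 0) := by
  induction N with
  | zero => intro n hn; simp_all [walshDirichlet]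
  | succ N ih =>
    intro n hn
    rw [sum_range_succ]
    rcases lt_or_ge n (2 ^ N) with hnN | hnN
    · rw [Nat.testBit_lt_two_pow hnN, if_neg Bool.false_ne_true, add_zero, ih n hnN]
    obtain ⟨m, rfl⟩ := Nat.exists_eq_add_of_le hnN
    have hm : m < 2 ^ N := by rw [pow_succ] at hn; omega
    have hbits : ∑ j ∈ range N,
        (if (2 ^ N + m).testBit j then walsh (2 ^ j) x * walshDirichlet (2 ^ j) x else 0) =
        ∑ j ∈ range N,
        (if m.testBit j then walsh (2 ^ j) x * walshDirichlet (2 ^ j) x else 0) :=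
      sum_congr rfl fun j hj => by rw [Nat.testBit_two_pow_add_gt (mem_range.mp hj)]
    rw [hbits, Nat.testBit_two_pow_add_eq, Nat.testBit_lt_two_pow hm, Bool.not_false,
      if_pos rfl, walshDirichlet_two_pow_add hm.le, walsh_two_pow_add hm, ← walsh_two_pow]
    linear_combination walsh (2 ^ N) x * ih m hm - walsh_mul_walshDirichlet_two_pow hm x
      - walsh m x * walshDirichlet (2 ^ N) x * walsh_mul_self (2 ^ N) x

theorem stmt5_general (n : ℕ) (t : ℝ) :
    walshDirichlet n t =
      walsh n t * ∑ j ∈ Finset.range n,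
        (if n.testBit j then walsh (2 ^ j) t * walshDirichlet (2 ^ j) t else 0) :=
  walshDirichlet_eq_of_lt_two_pow n t n Nat.lt_two_pow_self

/-- `D_n(t) = w_n(t) ∑_j n_j w_{2^j}(t) D_{2^j}(t)` where `n = ∑ n_j 2^j`. -/
theorem stmt5 (n : ℕ) (t : ℝ) (ht : t ∈ Ico (0 : ℝ) 1) :
    walshDirichlet n t =
      walsh n t * ∑ j ∈ Finset.range n,
        (if n.testBit j then walsh (2 ^ j) t * walshDirichlet (2 ^ j) t else 0) :=
  stmt5_general n t
end

section
/- If f : [0,1)² → ℝ satisfies ∑_{n=1}^∞ v_s#(f;n) · log(n+1) / n² < ∞ for s = 1,2, then f has bounded {n / log(n+1)}#-variation. -/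
open MeasureTheory Filter Set ENNReal

open Topology

/-! Write `w m = log (m + 2) / (m + 1)`, so that the `i`-th increment of a family of intervals
carries the weight `w i`. Abel summation rewrites `∑ |Δ_i| w_i` as
`∑_m (w_m - w_{m+1}) (|Δ_0| + ⋯ + |Δ_m|)`. Each partial sum involves at most `m + 1` intervals,
so it is bounded by `v₁#(m + 1, f)` (`v₁#` is monotone in `n`: splitting an interval does not
decrease the sum), and `w_m - w_{m+1} ≤ log (m + 2) / (m + 1)²`. -/

/-- `w` need not be monotone: `ENNReal.ofReal` is subadditive. -/
lemma ofReal_le_tsum_sub_succ {w : ℕ → ℝ} (hw : Tendsto w atTop (𝓝 0)) (i : ℕ) :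
    ENNReal.ofReal (w i) ≤ ∑' m, if i ≤ m then ENNReal.ofReal (w m - w (m + 1)) else 0 := by
  have hlim : Tendsto (fun K => ENNReal.ofReal (w i - w (i + K))) atTop
      (𝓝 (ENNReal.ofReal (w i))) := by
    have hshift : Tendsto (fun K => w (i + K)) atTop (𝓝 0) :=
      hw.comp (tendsto_atTop_mono (fun K => Nat.le_add_left K i) tendsto_id)
    simpa [Function.comp_def] using
      (ENNReal.continuous_ofReal.tendsto _).comp (tendsto_const_nhds.sub hshift)
  refine le_of_tendsto' hlim fun K => ?_
  calc ENNReal.ofReal (w i - w (i + K))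
      = ENNReal.ofReal (∑ k ∈ Finset.range K, (w (i + k) - w (i + (k + 1)))) := by
        rw [Finset.sum_range_sub' (fun k => w (i + k)), add_zero]
    _ ≤ ∑ k ∈ Finset.range K, ENNReal.ofReal (w (i + k) - w (i + (k + 1))) :=
        Finset.le_sum_of_subadditive _ ENNReal.ofReal_zero.le
          (fun _ _ => ENNReal.ofReal_add_le) _ _
    _ = ∑ m ∈ (Finset.range K).map (addLeftEmbedding i),
          if i ≤ m then ENNReal.ofReal (w m - w (m + 1)) else 0 := by
        simp [Finset.sum_map, add_assoc]
    _ ≤ _ := ENNReal.sum_le_tsum _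

lemma sum_mul_ofReal_le_tsum_prefixSum {n : ℕ} (d : Fin n → ℝ≥0∞) {w : ℕ → ℝ}
    (hw : Tendsto w atTop (𝓝 0)) :
    ∑ i, d i * ENNReal.ofReal (w i) ≤
      ∑' m, (∑ i with i.1 ≤ m, d i) * ENNReal.ofReal (w m - w (m + 1)) := by
  calc ∑ i, d i * ENNReal.ofReal (w i)
      ≤ ∑ i, d i * ∑' m, if i.1 ≤ m then ENNReal.ofReal (w m - w (m + 1)) else 0 := by
        gcongr with i; exact ofReal_le_tsum_sub_succ hw i
    _ = ∑' m, ∑ i, if i.1 ≤ m then d i * ENNReal.ofReal (w m - w (m + 1)) else 0 := by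
        simp_rw [← ENNReal.tsum_mul_left, mul_ite, mul_zero]
        exact (Summable.tsum_finsetSum fun _ _ => ENNReal.summable).symm
    _ = _ := by
        simp_rw [Finset.sum_filter, Finset.sum_mul, ite_mul, zero_mul]

namespace SharpPack

variable {n : ℕ}

def incr (f : ℝ → ℝ → ℝ) (P : SharpPack n) (i : Fin n) : ℝ≥0∞ :=
  ENNReal.ofReal |f (P.b i) (P.y i) - f (P.a i) (P.y i)|

lemma sum_incr_le_vSharp1 (f : ℝ → ℝ → ℝ) (P : SharpPack n) :
    ∑ i, P.incr f i ≤ vSharp1 f n :=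
  le_iSup (fun Q : SharpPack n => ∑ i, Q.incr f i) P

def comp {k : ℕ} (P : SharpPack n) (e : Fin k ↪ Fin n) : SharpPack k where
  a := P.a ∘ e
  b := P.b ∘ e
  ha i := P.ha (e i)
  hab i := P.hab (e i)
  hb i := P.hb (e i)
  disj i j hij := P.disj (e i) (e j) (e.injective.ne hij)
  y := P.y ∘ e
  hy i := P.hy (e i)

lemma sum_incr_le_vSharp1_card (f : ℝ → ℝ → ℝ) (P : SharpPack n) (s : Finset (Fin n)) :
    ∑ i ∈ s, P.incr f i ≤ vSharp1 f s.card := by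
  set e := (s.orderEmbOfFin rfl).toEmbedding
  calc ∑ i ∈ s, P.incr f i = ∑ i ∈ Finset.univ.map e, P.incr f i := by
        rw [Finset.map_orderEmbOfFin_univ]
    _ = ∑ j, (P.comp e).incr f j := Finset.sum_map _ _ _
    _ ≤ vSharp1 f s.card := sum_incr_le_vSharp1 f _

/-- Cut the first interval at its midpoint; the right half becomes the second interval. -/
noncomputable def splitFirst (P : SharpPack (n + 1)) : SharpPack (n + 2) :=
  let c := (P.a 0 + P.b 0) / 2
  have hac : P.a 0 < c := left_lt_add_div_two.mpr (P.hab 0)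
  have hcb : c < P.b 0 := add_div_two_lt_right.mpr (P.hab 0)
  have le_tail (j : Fin (n + 1)) : P.a j ≤ Function.update P.a 0 c j := by
    rcases eq_or_ne j 0 with rfl | hj
    · simpa using hac.le
    · simp [hj]
  have tail_lt (j : Fin (n + 1)) : Function.update P.a 0 c j < P.b j := by
    rcases eq_or_ne j 0 with rfl | hj
    · simpa using hcb
    · simpa [hj] using P.hab j
  have tail_sub (j : Fin (n + 1)) :
      Ioo (Function.update P.a 0 c j) (P.b j) ⊆ Ioo (P.a j) (P.b j) :=
    Ioo_subset_Ioo_left (le_tail j)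
  have head_tail (j : Fin (n + 1)) :
      Disjoint (Ioo (P.a 0) c) (Ioo (Function.update P.a 0 c j) (P.b j)) := by
    rcases eq_or_ne j 0 with rfl | hj
    · simp [Ioo_disjoint_Ioo, hac.le, hcb.le]
    · exact (P.disj 0 j hj.symm).mono (Ioo_subset_Ioo_right hcb.le) (tail_sub j)
  { a := Fin.cons (P.a 0) (Function.update P.a 0 c)
    b := Fin.cons c P.b
    y := Fin.cons (P.y 0) P.y
    ha := Fin.cases (P.ha 0) fun j => (P.ha j).trans (le_tail j)
    hab := Fin.cases hac tail_lt
    hb := Fin.cases (hcb.le.trans (P.hb 0)) P.hb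
    hy := Fin.cases (P.hy 0) P.hy
    disj := by
      intro i j hij
      cases i using Fin.cases <;> cases j using Fin.cases
      · exact absurd rfl hij
      · exact head_tail _
      · exact (head_tail _).symm
      · exact (P.disj _ _ (fun h => hij (congrArg _ h))).mono (tail_sub _) (tail_sub _) }

lemma sum_incr_le_sum_incr_splitFirst (f : ℝ → ℝ → ℝ) (P : SharpPack (n + 1)) :
    ∑ i, P.incr f i ≤ ∑ i, P.splitFirst.incr f i := by
  set c := (P.a 0 + P.b 0) / 2
  have head : P.incr f 0 ≤ P.splitFirst.incr f 0 + P.splitFirst.incr f 1 := by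
    calc P.incr f 0 ≤ ENNReal.ofReal (|f c (P.y 0) - f (P.a 0) (P.y 0)| +
          |f (P.b 0) (P.y 0) - f c (P.y 0)|) :=
          ENNReal.ofReal_le_ofReal ((abs_sub_le _ _ _).trans_eq (add_comm _ _))
      _ ≤ _ := ENNReal.ofReal_add_le
  have tail (j : Fin n) : P.splitFirst.incr f j.succ.succ = P.incr f j.succ := by
    simp only [splitFirst, incr, Fin.cons_succ, Function.update_of_ne (Fin.succ_ne_zero j)]
  rw [Fin.sum_univ_succ, Fin.sum_univ_succ, Fin.sum_univ_succ]
  simp only [tail, ← add_assoc]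
  gcongr
  exact head

end SharpPack

lemma vSharp1_mono (f : ℝ → ℝ → ℝ) : Monotone (vSharp1 f) := by
  refine monotone_nat_of_le_succ fun n => iSup_le fun P => ?_
  cases n with
  | zero => simp
  | succ n =>
    exact (P.sum_incr_le_sum_incr_splitFirst f).trans (P.splitFirst.sum_incr_le_vSharp1 f)

lemma SharpPack.sum_incr_prefix_le_vSharp1 (f : ℝ → ℝ → ℝ) {n : ℕ} (P : SharpPack n) (m : ℕ) :
    ∑ i with i.1 ≤ m, P.incr f i ≤ vSharp1 f (m + 1) := by
  have hcard : (Finset.univ.filter fun i : Fin n => i.1 ≤ m).card ≤ m + 1 := by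
    simpa using Finset.card_le_card_of_injOn (fun i : Fin n => i.1) (t := Finset.range (m + 1))
      (fun i hi => by simpa [Nat.lt_succ_iff] using hi) Fin.val_injective.injOn
  exact (P.sum_incr_le_vSharp1_card f _).trans (vSharp1_mono f hcard)

/-- The weight `1 / λ_{m+1}` for `λ_n = n / log (n + 1)`. -/
noncomputable def logRatio (m : ℕ) : ℝ := Real.log (m + 2) / (m + 1)

lemma tendsto_logRatio_atTop : Tendsto logRatio atTop (𝓝 0) := by
  have h := (Real.tendsto_pow_log_div_mul_add_atTop 1 (-1) 1 one_ne_zero).comp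
    (tendsto_natCast_atTop_atTop.atTop_add (tendsto_const_nhds (x := (2 : ℝ))))
  refine h.congr fun m => ?_
  simp only [Function.comp_apply, pow_one, logRatio]
  ring_nf

lemma logRatio_sub_succ_le (m : ℕ) :
    logRatio m - logRatio (m + 1) ≤ Real.log (m + 2) / (m + 1) ^ 2 := by
  have hm : (0 : ℝ) ≤ m := m.cast_nonneg
  have hlog : 0 ≤ Real.log (m + 2) := Real.log_nonneg (by linarith)
  have hmono : Real.log (m + 2) / (m + 2) ≤ logRatio (m + 1) := by
    rw [logRatio]; push_cast
    rw [show (m : ℝ) + 1 + 1 = m + 2 by ring]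
    gcongr
    linarith
  calc logRatio m - logRatio (m + 1)
      ≤ Real.log (m + 2) / (m + 1) - Real.log (m + 2) / (m + 2) := by rw [logRatio]; linarith
    _ = Real.log (m + 2) / ((m + 1) * (m + 2)) := by field_simp; ring
    _ ≤ Real.log (m + 2) / (m + 1) ^ 2 := by gcongr; nlinarith

lemma sharpSum_eq_sum_incr_mul_logRatio (f : ℝ → ℝ → ℝ) {n : ℕ} (P : SharpPack n) :
    sharpSum (fun n => (n : ℝ) / Real.log ((n : ℝ) + 1)) 0 f P =
      ∑ i, P.incr f i * ENNReal.ofReal (logRatio i) := by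
  refine Finset.sum_congr rfl fun i _ => ?_
  rw [SharpPack.incr, ← ENNReal.ofReal_mul (abs_nonneg _), div_div_eq_mul_div, logRatio,
    mul_div_assoc]
  push_cast
  ring_nf

lemma sharpV1_le_tsum_vSharp1 (f : ℝ → ℝ → ℝ) :
    sharpV1 (fun n => (n : ℝ) / Real.log ((n : ℝ) + 1)) 0 f ≤
      ∑' m : ℕ, vSharp1 f (m + 1) * ENNReal.ofReal (Real.log ((m : ℝ) + 2) / ((m : ℝ) + 1) ^ 2) :=
  iSup₂_le fun _ P => calc
    _ = ∑ i, P.incr f i * ENNReal.ofReal (logRatio i) := sharpSum_eq_sum_incr_mul_logRatio f P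
    _ ≤ ∑' m, (∑ i with i.1 ≤ m, P.incr f i) * ENNReal.ofReal (logRatio m - logRatio (m + 1)) :=
        sum_mul_ofReal_le_tsum_prefixSum _ tendsto_logRatio_atTop
    _ ≤ _ := ENNReal.tsum_le_tsum fun m =>
        mul_le_mul' (P.sum_incr_prefix_le_vSharp1 f m)
          (ENNReal.ofReal_le_ofReal (logRatio_sub_succ_le m))

/-- if `∑ v_s^#(f;n) log(n+1)/n² < ∞` for `s = 1,2`, then
`f ∈ {n / log(n+1)}^# BV`. -/
theorem stmt8 (f : ℝ → ℝ → ℝ)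
    (h1 : (∑' n : ℕ, vSharp1 f (n + 1) *
      ENNReal.ofReal (Real.log ((n : ℝ) + 2) / ((n : ℝ) + 1) ^ 2)) ≠ ⊤)
    (h2 : (∑' n : ℕ, vSharp2 f (n + 1) *
      ENNReal.ofReal (Real.log ((n : ℝ) + 2) / ((n : ℝ) + 1) ^ 2)) ≠ ⊤) :
    SharpBV (fun n => (n : ℝ) / Real.log ((n : ℝ) + 1)) f :=
  ENNReal.add_ne_top.mpr
    ⟨ne_top_of_le_ne_top h1 (sharpV1_le_tsum_vSharp1 f),
      ne_top_of_le_ne_top h2 (sharpV1_le_tsum_vSharp1 fun x y => f y x)⟩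
end

section
/- For any sequence Λ = {λ_n} of positive numbers, the class C([0,1]²) ∩ Λ#BV equipped with the norm ‖f‖ = ‖f‖_C + Λ#V(f) is a Banach space (complete normed space). -/
open MeasureTheory Filter Set ENNReal

/-! Every part of `bvNorm Λ f` is a supremum of finite sums of terms `ofReal |ℓ f|` or
`ofReal (|ℓ f| / Λ k)`, with `ℓ f` a value or an increment of `f` on the closed unit square. Hence
`bvNorm Λ` is a seminorm, and it is lower semicontinuous under pointwise convergence on the square.
A Cauchy sequence `F` is uniformly Cauchy there, since the sup norm is part of `bvNorm Λ`, so it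
converges uniformly to a continuous `g`; lower semicontinuity along `F p - F q → F p - g` (`q → ∞`)
turns the Cauchy bound into `bvNorm Λ (F p - g) ≤ ε`. -/

open scoped Topology

namespace SharpPack

variable {n : ℕ} (P : SharpPack n) (i : Fin n)

lemma a_mem : P.a i ∈ Icc (0:ℝ) 1 := ⟨P.ha i, (P.hab i).le.trans (P.hb i)⟩

lemma b_mem : P.b i ∈ Icc (0:ℝ) 1 := ⟨(P.ha i).trans (P.hab i).le, P.hb i⟩

lemma y_mem : P.y i ∈ Icc (0:ℝ) 1 := Ico_subset_Icc_self (P.hy i)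

end SharpPack

lemma supNorm_le_bvNorm (Λ : ℕ → ℝ) (f : ℝ → ℝ → ℝ) : supNorm f ≤ bvNorm Λ f :=
  le_self_add

section Seminorm

variable {Λ : ℕ → ℝ}

lemma ofReal_abs_le_supNorm (f : ℝ → ℝ → ℝ) {x y : ℝ} (hx : x ∈ Icc (0:ℝ) 1)
    (hy : y ∈ Icc (0:ℝ) 1) : ENNReal.ofReal |f x y| ≤ supNorm f :=
  le_iSup₂ (f := fun (x : Icc (0:ℝ) 1) (y : Icc (0:ℝ) 1) => ENNReal.ofReal |f x y|)
    ⟨x, hx⟩ ⟨y, hy⟩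

lemma sharpSum_le_sharpV1 (m : ℕ) (f : ℝ → ℝ → ℝ) {n : ℕ} (P : SharpPack n) :
    sharpSum Λ m f P ≤ sharpV1 Λ m f :=
  le_iSup₂ (f := fun n (P : SharpPack n) => sharpSum Λ m f P) n P

lemma supNorm_add_le (f g : ℝ → ℝ → ℝ) :
    supNorm (fun x y => f x y + g x y) ≤ supNorm f + supNorm g :=
  iSup₂_le fun x y => calc
    ENNReal.ofReal |f x y + g x y| ≤ ENNReal.ofReal (|f x y| + |g x y|) :=
      ENNReal.ofReal_le_ofReal (abs_add_le _ _)
    _ ≤ ENNReal.ofReal |f x y| + ENNReal.ofReal |g x y| := ENNReal.ofReal_add_le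
    _ ≤ supNorm f + supNorm g :=
      add_le_add (ofReal_abs_le_supNorm f x.2 y.2) (ofReal_abs_le_supNorm g x.2 y.2)

lemma ofReal_abs_add_div_le (a b c : ℝ) :
    ENNReal.ofReal (|a + b| / c) ≤ ENNReal.ofReal (|a| / c) + ENNReal.ofReal (|b| / c) := by
  rcases le_or_gt c 0 with hc | hc
  · rw [ENNReal.ofReal_of_nonpos (div_nonpos_of_nonneg_of_nonpos (abs_nonneg _) hc)]
    exact zero_le
  · calc ENNReal.ofReal (|a + b| / c) ≤ ENNReal.ofReal (|a| / c + |b| / c) := by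
          rw [← add_div]; gcongr; exact abs_add_le a b
      _ ≤ _ := ENNReal.ofReal_add_le

lemma sharpSum_add_le (m : ℕ) (f g : ℝ → ℝ → ℝ) {n : ℕ} (P : SharpPack n) :
    sharpSum Λ m (fun x y => f x y + g x y) P ≤ sharpSum Λ m f P + sharpSum Λ m g P := by
  unfold sharpSum
  rw [← Finset.sum_add_distrib]
  refine Finset.sum_le_sum fun i _ => ?_
  rw [add_sub_add_comm]
  exact ofReal_abs_add_div_le _ _ _

lemma sharpV1_add_le (m : ℕ) (f g : ℝ → ℝ → ℝ) :
    sharpV1 Λ m (fun x y => f x y + g x y) ≤ sharpV1 Λ m f + sharpV1 Λ m g :=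
  iSup₂_le fun _ P => (sharpSum_add_le m f g P).trans
    (add_le_add (sharpSum_le_sharpV1 m f P) (sharpSum_le_sharpV1 m g P))

lemma bvNorm_add_le (f g : ℝ → ℝ → ℝ) :
    bvNorm Λ (fun x y => f x y + g x y) ≤ bvNorm Λ f + bvNorm Λ g := by
  have h₂ : sharpV2 Λ 0 (fun x y => f x y + g x y) ≤ sharpV2 Λ 0 f + sharpV2 Λ 0 g :=
    sharpV1_add_le 0 (fun x y => f y x) (fun x y => g y x)
  calc bvNorm Λ (fun x y => f x y + g x y)
      ≤ (supNorm f + supNorm g) + ((sharpV1 Λ 0 f + sharpV1 Λ 0 g)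
        + (sharpV2 Λ 0 f + sharpV2 Λ 0 g)) :=
        add_le_add (supNorm_add_le f g) (add_le_add (sharpV1_add_le 0 f g) h₂)
    _ = bvNorm Λ f + bvNorm Λ g := by unfold bvNorm sharpV; ring

lemma supNorm_const_mul (c : ℝ) (f : ℝ → ℝ → ℝ) :
    supNorm (fun x y => c * f x y) = ENNReal.ofReal |c| * supNorm f := by
  simp only [supNorm, abs_mul, ENNReal.ofReal_mul (abs_nonneg c), ← ENNReal.mul_iSup]

lemma sharpV1_const_mul (m : ℕ) (c : ℝ) (f : ℝ → ℝ → ℝ) :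
    sharpV1 Λ m (fun x y => c * f x y) = ENNReal.ofReal |c| * sharpV1 Λ m f := by
  simp only [sharpV1, sharpSum, ← mul_sub, abs_mul, mul_div_assoc,
    ENNReal.ofReal_mul (abs_nonneg c), ← Finset.mul_sum, ← ENNReal.mul_iSup]

lemma bvNorm_const_mul (c : ℝ) (f : ℝ → ℝ → ℝ) :
    bvNorm Λ (fun x y => c * f x y) = ENNReal.ofReal |c| * bvNorm Λ f := by
  simp only [bvNorm, sharpV, sharpV2, supNorm_const_mul, sharpV1_const_mul, mul_add]

lemma eq_zero_of_bvNorm_eq_zero {f : ℝ → ℝ → ℝ} (hf : bvNorm Λ f = 0) {x y : ℝ}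
    (hx : x ∈ Icc (0:ℝ) 1) (hy : y ∈ Icc (0:ℝ) 1) : f x y = 0 := by
  have h : ENNReal.ofReal |f x y| = 0 :=
    nonpos_iff_eq_zero.mp (hf ▸ (ofReal_abs_le_supNorm f hx hy).trans (supNorm_le_bvNorm Λ f))
  simpa using h

end Seminorm

lemma ENNReal.le_liminf_add {u v : ℕ → ℝ≥0∞} :
    liminf u atTop + liminf v atTop ≤ liminf (fun n => u n + v n) atTop := by
  have hmono : ∀ w : ℕ → ℝ≥0∞, Monotone fun n => ⨅ i ≥ n, w i :=
    fun w _ _ hmn => biInf_mono fun _ hi => hmn.trans hi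
  simp only [liminf_eq_iSup_iInf_of_nat]
  rw [ENNReal.iSup_add_iSup_of_monotone (hmono u) (hmono v)]
  exact iSup_mono fun n => le_iInf₂ fun i hi => add_le_add (iInf₂_le i hi) (iInf₂_le i hi)

section LowerSemicontinuity

variable {Λ : ℕ → ℝ} {F : ℕ → ℝ → ℝ → ℝ} {g : ℝ → ℝ → ℝ}

lemma tendsto_sharpSum (m : ℕ) {n : ℕ} (P : SharpPack n)
    (hF : ∀ x ∈ Icc (0:ℝ) 1, ∀ y ∈ Icc (0:ℝ) 1, Tendsto (F · x y) atTop (𝓝 (g x y))) :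
    Tendsto (fun q => sharpSum Λ m (F q) P) atTop (𝓝 (sharpSum Λ m g P)) :=
  tendsto_finsetSum _ fun i _ => (ENNReal.continuous_ofReal.tendsto _).comp <|
    (((hF _ (P.b_mem i) _ (P.y_mem i)).sub (hF _ (P.a_mem i) _ (P.y_mem i))).abs).div_const _

lemma supNorm_le_liminf
    (hF : ∀ x ∈ Icc (0:ℝ) 1, ∀ y ∈ Icc (0:ℝ) 1, Tendsto (F · x y) atTop (𝓝 (g x y))) :
    supNorm g ≤ liminf (fun q => supNorm (F q)) atTop :=
  iSup₂_le fun x y => by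
    have h := (ENNReal.continuous_ofReal.tendsto _).comp (hF x x.2 y y.2).abs
    rw [← h.liminf_eq]
    exact liminf_le_liminf (.of_forall fun q => ofReal_abs_le_supNorm (F q) x.2 y.2)

lemma sharpV1_le_liminf (m : ℕ)
    (hF : ∀ x ∈ Icc (0:ℝ) 1, ∀ y ∈ Icc (0:ℝ) 1, Tendsto (F · x y) atTop (𝓝 (g x y))) :
    sharpV1 Λ m g ≤ liminf (fun q => sharpV1 Λ m (F q)) atTop :=
  iSup₂_le fun _ P => by
    rw [← (tendsto_sharpSum m P hF).liminf_eq]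
    exact liminf_le_liminf (.of_forall fun q => sharpSum_le_sharpV1 m (F q) P)

lemma bvNorm_le_liminf
    (hF : ∀ x ∈ Icc (0:ℝ) 1, ∀ y ∈ Icc (0:ℝ) 1, Tendsto (F · x y) atTop (𝓝 (g x y))) :
    bvNorm Λ g ≤ liminf (fun q => bvNorm Λ (F q)) atTop :=
  calc bvNorm Λ g
      ≤ liminf (fun q => supNorm (F q)) atTop + (liminf (fun q => sharpV1 Λ 0 (F q)) atTop +
          liminf (fun q => sharpV1 Λ 0 (fun x y => F q y x)) atTop) :=
        add_le_add (supNorm_le_liminf hF) <| add_le_add (sharpV1_le_liminf 0 hF)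
          (sharpV1_le_liminf 0 fun x hx y hy => hF y hy x hx)
    _ ≤ liminf (fun q => bvNorm Λ (F q)) atTop :=
        (add_le_add le_rfl ENNReal.le_liminf_add).trans ENNReal.le_liminf_add

lemma bvNorm_le_of_tendsto {C : ℝ≥0∞}
    (hF : ∀ x ∈ Icc (0:ℝ) 1, ∀ y ∈ Icc (0:ℝ) 1, Tendsto (F · x y) atTop (𝓝 (g x y)))
    (hC : ∀ᶠ q in atTop, bvNorm Λ (F q) ≤ C) : bvNorm Λ g ≤ C :=
  (bvNorm_le_liminf hF).trans (liminf_le_of_frequently_le' hC.frequently)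

end LowerSemicontinuity

section Completeness

variable {Λ : ℕ → ℝ} {F : ℕ → ℝ → ℝ → ℝ}
  (hF : ∀ ε : ℝ, 0 < ε → ∃ M : ℕ, ∀ p, M ≤ p → ∀ q, M ≤ q →
    bvNorm Λ (fun x y => F p x y - F q x y) < ENNReal.ofReal ε)
include hF

lemma uniformCauchySeqOn_of_bvNorm :
    UniformCauchySeqOn (fun k => Function.uncurry (F k)) atTop (Icc (0:ℝ) 1 ×ˢ Icc (0:ℝ) 1) := by
  refine Metric.uniformCauchySeqOn_iff.mpr fun ε hε => ?_
  obtain ⟨M, hM⟩ := hF ε hε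
  refine ⟨M, fun p hp q hq z hz => ?_⟩
  have h := ((ofReal_abs_le_supNorm _ hz.1 hz.2).trans (supNorm_le_bvNorm Λ _)).trans_lt
    (hM p hp q hq)
  exact Real.dist_eq _ _ ▸ (ENNReal.ofReal_lt_ofReal_iff hε).mp h

variable {g : ℝ → ℝ → ℝ}
  (hg : ∀ x ∈ Icc (0:ℝ) 1, ∀ y ∈ Icc (0:ℝ) 1, Tendsto (F · x y) atTop (𝓝 (g x y)))
include hg

lemma bvNorm_ne_top_of_tendsto (hfin : ∀ k, bvNorm Λ (F k) ≠ ⊤) : bvNorm Λ g ≠ ⊤ := by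
  obtain ⟨M, hM⟩ := hF 1 one_pos
  refine ne_top_of_le_ne_top (add_ne_top.mpr ⟨ofReal_ne_top (r := 1), hfin M⟩)
    (bvNorm_le_of_tendsto hg ?_)
  filter_upwards [eventually_ge_atTop M] with q hq
  calc bvNorm Λ (F q) = bvNorm Λ (fun x y => (F q x y - F M x y) + F M x y) := by
        simp only [sub_add_cancel]
    _ ≤ _ := bvNorm_add_le _ _
    _ ≤ ENNReal.ofReal 1 + bvNorm Λ (F M) := add_le_add (hM q hq M le_rfl).le le_rfl

lemma eventually_bvNorm_sub_le {ε : ℝ} (hε : 0 < ε) :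
    ∀ᶠ p in atTop, bvNorm Λ (fun x y => F p x y - g x y) ≤ ENNReal.ofReal ε := by
  obtain ⟨M, hM⟩ := hF ε hε
  filter_upwards [eventually_ge_atTop M] with p hp
  exact bvNorm_le_of_tendsto (fun x hx y hy => tendsto_const_nhds.sub (hg x hx y hy))
    (eventually_atTop.mpr ⟨M, fun q hq => (hM p hp q hq).le⟩)

lemma tendsto_bvNorm_sub :
    Tendsto (fun p => bvNorm Λ (fun x y => F p x y - g x y)) atTop (𝓝 0) := by
  refine ENNReal.tendsto_nhds_zero.mpr fun ε hε => ?_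
  obtain ⟨δ, -, hδ, hδε⟩ := ENNReal.lt_iff_exists_real_btwn.mp hε
  exact (eventually_bvNorm_sub_le hF hg (ENNReal.ofReal_pos.mp hδ)).mono
    fun p hp => hp.trans hδε.le

end Completeness

theorem stmt14_general (Λ : ℕ → ℝ) :
    (∀ f g : ℝ → ℝ → ℝ,
        bvNorm Λ (fun x y => f x y + g x y) ≤ bvNorm Λ f + bvNorm Λ g) ∧
    (∀ (c : ℝ) (f : ℝ → ℝ → ℝ),
        bvNorm Λ (fun x y => c * f x y) = ENNReal.ofReal |c| * bvNorm Λ f) ∧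
    (∀ f : ℝ → ℝ → ℝ,
        ContinuousOn (Function.uncurry f) (Icc (0 : ℝ) 1 ×ˢ Icc (0 : ℝ) 1) →
        bvNorm Λ f = 0 → ∀ x ∈ Icc (0 : ℝ) 1, ∀ y ∈ Icc (0 : ℝ) 1, f x y = 0) ∧
    (∀ F : ℕ → ℝ → ℝ → ℝ,
        (∀ k, ContinuousOn (Function.uncurry (F k)) (Icc (0 : ℝ) 1 ×ˢ Icc (0 : ℝ) 1)) →
        (∀ k, bvNorm Λ (F k) ≠ ⊤) →
        (∀ ε : ℝ, 0 < ε → ∃ M : ℕ, ∀ p, M ≤ p → ∀ q, M ≤ q →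
          bvNorm Λ (fun x y => F p x y - F q x y) < ENNReal.ofReal ε) →
        ∃ g : ℝ → ℝ → ℝ,
          ContinuousOn (Function.uncurry g) (Icc (0 : ℝ) 1 ×ˢ Icc (0 : ℝ) 1) ∧
          bvNorm Λ g ≠ ⊤ ∧
          Tendsto (fun k => bvNorm Λ (fun x y => F k x y - g x y)) atTop (nhds 0)) := by
  refine ⟨bvNorm_add_le, bvNorm_const_mul,
    fun f _ hf x hx y hy => eq_zero_of_bvNorm_eq_zero hf hx hy, ?_⟩
  intro F hcont hfin hcau
  have hunif := uniformCauchySeqOn_of_bvNorm hcau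
  set G : ℝ × ℝ → ℝ := fun z => limUnder atTop fun k => Function.uncurry (F k) z
  have hG : ∀ z ∈ Icc (0:ℝ) 1 ×ˢ Icc (0:ℝ) 1,
      Tendsto (fun k => Function.uncurry (F k) z) atTop (𝓝 (G z)) :=
    fun z hz => (hunif.cauchySeq hz).tendsto_limUnder
  have hg : ∀ x ∈ Icc (0:ℝ) 1, ∀ y ∈ Icc (0:ℝ) 1,
      Tendsto (F · x y) atTop (𝓝 (Function.curry G x y)) :=
    fun x hx y hy => hG (x, y) ⟨hx, hy⟩
  exact ⟨Function.curry G, (hunif.tendstoUniformlyOn_of_tendsto hG).continuousOn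
    (.of_forall hcont), bvNorm_ne_top_of_tendsto hcau hg hfin, tendsto_bvNorm_sub hcau hg⟩

/-- `C([0,1]²) ∩ Λ^# BV` with the norm `‖·‖_C + Λ^# V(·)` is a Banach
space: the norm is subadditive, absolutely homogeneous, definite on the square, and the
space is complete. -/
theorem stmt14 (Λ : ℕ → ℝ) (hΛ : ∀ n, 0 < Λ n) :
    (∀ f g : ℝ → ℝ → ℝ,
        bvNorm Λ (fun x y => f x y + g x y) ≤ bvNorm Λ f + bvNorm Λ g) ∧
    (∀ (c : ℝ) (f : ℝ → ℝ → ℝ),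
        bvNorm Λ (fun x y => c * f x y) = ENNReal.ofReal |c| * bvNorm Λ f) ∧
    (∀ f : ℝ → ℝ → ℝ,
        ContinuousOn (Function.uncurry f) (Icc (0 : ℝ) 1 ×ˢ Icc (0 : ℝ) 1) →
        bvNorm Λ f = 0 → ∀ x ∈ Icc (0 : ℝ) 1, ∀ y ∈ Icc (0 : ℝ) 1, f x y = 0) ∧
    (∀ F : ℕ → ℝ → ℝ → ℝ,
        (∀ k, ContinuousOn (Function.uncurry (F k)) (Icc (0 : ℝ) 1 ×ˢ Icc (0 : ℝ) 1)) →
        (∀ k, bvNorm Λ (F k) ≠ ⊤) →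
        (∀ ε : ℝ, 0 < ε → ∃ M : ℕ, ∀ p, M ≤ p → ∀ q, M ≤ q →
          bvNorm Λ (fun x y => F p x y - F q x y) < ENNReal.ofReal ε) →
        ∃ g : ℝ → ℝ → ℝ,
          ContinuousOn (Function.uncurry g) (Icc (0 : ℝ) 1 ×ˢ Icc (0 : ℝ) 1) ∧
          bvNorm Λ g ≠ ⊤ ∧
          Tendsto (fun k => bvNorm Λ (fun x y => F k x y - g x y)) atTop (nhds 0)) :=
  stmt14_general Λ
end
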